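/- arXiv:2107.04753 — 2 statements merged into one kernel-verified Lean document; each statement's English description precedes it below -/
import Mathlib

section
/- Let H be a Hopf algebra over k and (V,Y,1,s) an H-module field algebra. Then: (1) the fixed-point space V^H = {v ∈ V : hv = ε(h)v for all h ∈ H} contains 1, is stable under s and under all products a_n b (a,b ∈ V^H), and (V^H, Y, 1, s) is a field algebra; (2) the space V⊗H with the map Y_H(a⊗h,z)(b⊗g) = Σ_{n∈Z} a_n(h_1 b) ⊗ h_2 g · z^{−n−1}, vacuum 1⊗1 and translation operator s(a⊗h) = sa⊗h, is a field algebra. -/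
open scoped TensorProduct DirectSum

namespace HopfVA

/-- Generalized binomial coefficient `C(r, j)` for an integer `r` (exact division). -/
def ibinom (r : ℤ) (j : ℕ) : ℤ := (∏ i ∈ Finset.range j, (r - (i : ℤ))) / (j.factorial : ℤ)

/-- `(-1)^q` for an integer exponent `q`. -/
def negOnePow (q : ℤ) : ℤ := if Even q then 1 else -1

section Core

variable {k : Type*} [CommRing k] {V : Type*} [AddCommGroup V] [Module k V]

/-- If `f p q` is the coefficient of `z^p w^q` of a two-variable formal distribution,
then `zwMul n f p q` is the coefficient of `z^p w^q` of `(z-w)^n` times that distribution. -/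
def zwMul (n : ℕ) (f : ℤ → ℤ → V) : ℤ → ℤ → V := fun p q =>
  ∑ i ∈ Finset.range (n + 1),
    ((-1 : ℤ) ^ i * (n.choose i : ℤ)) • f (p - ((n : ℤ) - (i : ℤ))) (q - (i : ℤ))

/-- The data of a state-field correspondence on a pointed vector space:
`Y a n b` is the `n`-th product `a_n b` (so that `Y(a,z)b = ∑ (a_n b) z^{-n-1}`),
`vac` is the vacuum vector and `T` is the translation operator. -/
structure VAData (k V : Type*) [CommRing k] [AddCommGroup V] [Module k V] where
  Y : V →ₗ[k] ℤ → Module.End k V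
  vac : V
  T : Module.End k V

namespace VAData

variable (F : VAData k V)

/-- coefficient of `z^p w^q` in `Y(a,z)Y(b,w)c`. -/
def prodZW (a b c : V) : ℤ → ℤ → V := fun p q => F.Y a (-p - 1) (F.Y b (-q - 1) c)

/-- coefficient of `z^p w^q` in `Y(b,w)Y(a,z)c`. -/
def prodWZ (a b c : V) : ℤ → ℤ → V := fun p q => F.Y b (-q - 1) (F.Y a (-p - 1) c)

/-- coefficient of `z^p w^q` in `i_{z,w} Y(a,z-w)Y(b,-w)c`. -/
noncomputable def compLHS (a b c : V) : ℤ → ℤ → V := fun p q =>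
  negOnePow q •
    ∑ᶠ j : ℕ, ibinom (p + (j : ℤ)) j • F.Y a (-p - 1 - (j : ℤ)) (F.Y b ((j : ℤ) - 1 - q) c)

/-- Truncated (at `j < J`) version of `compLHS`, for `h`-adic statements. -/
def compLHStr (J : ℕ) (a b c : V) : ℤ → ℤ → V := fun p q =>
  negOnePow q •
    ∑ j ∈ Finset.range J, ibinom (p + (j : ℤ)) j • F.Y a (-p - 1 - (j : ℤ)) (F.Y b ((j : ℤ) - 1 - q) c)

/-- coefficient of `z^p w^q` in `Y(Y(a,z)b,-w)c`. -/
def compRHS (a b c : V) : ℤ → ℤ → V := fun p q =>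
  negOnePow q • F.Y (F.Y a (-p - 1) b) (-q - 1) c

/-- The axioms of a state-field correspondence: truncation, the vacuum axioms
`Y(1,z)a = a`, `Y(a,z)1 = a + (Ta)z + ⋯ ∈ V[[z]]`, and translation covariance
`[T, Y(a,z)] = Y(Ta,z) = ∂_z Y(a,z)`. -/
def IsStateField : Prop :=
  (∀ a b : V, ∃ N : ℤ, ∀ n : ℤ, N ≤ n → F.Y a n b = 0) ∧
  (∀ (a : V) (n : ℤ), F.Y F.vac n a = if n = -1 then a else 0) ∧
  (∀ (a : V) (n : ℤ), 0 ≤ n → F.Y a n F.vac = 0) ∧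
  (∀ a : V, F.Y a (-1) F.vac = a) ∧
  (∀ a : V, F.Y a (-2) F.vac = F.T a) ∧
  (∀ (a b : V) (n : ℤ), F.Y (F.T a) n b = F.T (F.Y a n b) - F.Y a n (F.T b)) ∧
  (∀ (a b : V) (n : ℤ), F.Y (F.T a) n b = (-n : ℤ) • F.Y a (n - 1) b)

/-- The associativity relation
`(z-w)^N i_{z,w} Y(a,z-w)Y(b,-w)c = (z-w)^N Y(Y(a,z)b,-w)c`. -/
def IsAssocFA : Prop := ∀ a b c : V, ∃ N : ℕ, ∀ p q : ℤ,
  zwMul N (F.compLHS a b c) p q = zwMul N (F.compRHS a b c) p q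

/-- A field algebra is a state-field correspondence satisfying associativity. -/
def IsFieldAlgebra : Prop := F.IsStateField ∧ F.IsAssocFA

/-- `(z-w)^n [Y(a,z), Y(b,w)] = 0`. -/
def IsLocalPair (a b : V) : Prop :=
  ∃ n : ℕ, ∀ (c : V) (p q : ℤ), zwMul n (F.prodZW a b c) p q = zwMul n (F.prodWZ a b c) p q

/-- A vertex algebra is a field algebra all of whose pairs of fields are local. -/
def IsVertexAlgebra : Prop := F.IsFieldAlgebra ∧ ∀ a b : V, F.IsLocalPair a b

/-- `(z-w)^n Y(a,z)Y(b,w) = (z-w)^n ∑ᵢ Y(bⁱ,w)Y(aⁱ,z)`. -/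
def IsSLocalPair (a b : V) : Prop :=
  ∃ (n m : ℕ) (A B : Fin m → V), ∀ (c : V) (p q : ℤ),
    zwMul n (F.prodZW a b c) p q = ∑ i, zwMul n (F.prodWZ (A i) (B i) c) p q

/-- An `S`-local vertex algebra is a field algebra all of whose pairs of fields
are `S`-local. -/
def IsSLocalVA : Prop := F.IsFieldAlgebra ∧ ∀ a b : V, F.IsSLocalPair a b

end VAData

/-- Data of a module over a field algebra: the module fields `Y^M` and translation `sM`. -/
structure VModData (k V M : Type*) [CommRing k] [AddCommGroup V] [Module k V]
    [AddCommGroup M] [Module k M] where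
  YM : V →ₗ[k] ℤ → Module.End k M
  sM : Module.End k M

namespace VModData

variable {M : Type*} [AddCommGroup M] [Module k M]

/-- coefficient of `z^p w^q` in `Y^M(a,z)Y^M(b,w)x`. -/
def mprodZW (Mo : VModData k V M) (a b : V) (x : M) : ℤ → ℤ → M := fun p q =>
  Mo.YM a (-p - 1) (Mo.YM b (-q - 1) x)

/-- coefficient of `z^p w^q` in `Y^M(b,w)Y^M(a,z)x`. -/
def mprodWZ (Mo : VModData k V M) (a b : V) (x : M) : ℤ → ℤ → M := fun p q =>
  Mo.YM b (-q - 1) (Mo.YM a (-p - 1) x)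

/-- coefficient of `z^p w^q` in `i_{z,w} Y^M(a,z-w)Y^M(b,-w)x`. -/
noncomputable def mcompLHS (Mo : VModData k V M) (a b : V) (x : M) : ℤ → ℤ → M := fun p q =>
  negOnePow q •
    ∑ᶠ j : ℕ, ibinom (p + (j : ℤ)) j • Mo.YM a (-p - 1 - (j : ℤ)) (Mo.YM b ((j : ℤ) - 1 - q) x)

/-- coefficient of `z^p w^q` in `Y^M(Y(a,z)b,-w)x`. -/
def mcompRHS (F : VAData k V) (Mo : VModData k V M) (a b : V) (x : M) : ℤ → ℤ → M := fun p q =>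
  negOnePow q • Mo.YM (F.Y a (-p - 1) b) (-q - 1) x

/-- `M` is a left module over the field algebra `F`: truncation, vacuum, translation
invariance and the associativity axiom. -/
def IsModule (F : VAData k V) (Mo : VModData k V M) : Prop :=
  (∀ (a : V) (x : M), ∃ N : ℤ, ∀ n : ℤ, N ≤ n → Mo.YM a n x = 0) ∧
  (∀ (x : M) (n : ℤ), Mo.YM F.vac n x = if n = -1 then x else 0) ∧
  (∀ (a : V) (x : M) (n : ℤ),
      Mo.sM (Mo.YM a n x) - Mo.YM a n (Mo.sM x) = (-n : ℤ) • Mo.YM a (n - 1) x) ∧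
  (∀ (a b : V) (x : M), ∃ N : ℕ, ∀ p q : ℤ,
      zwMul N (mcompLHS Mo a b x) p q = zwMul N (mcompRHS F Mo a b x) p q)

/-- Locality of the module fields `Y^M(a,z)`, `Y^M(b,w)`. -/
def IsLocalModPair (Mo : VModData k V M) (a b : V) : Prop :=
  ∃ n : ℕ, ∀ (x : M) (p q : ℤ),
    zwMul n (mprodZW Mo a b x) p q = zwMul n (mprodWZ Mo a b x) p q

/-- `S`-locality of the module fields. -/
def IsSLocalModPair (Mo : VModData k V M) (a b : V) : Prop :=
  ∃ (n m : ℕ) (A B : Fin m → V), ∀ (x : M) (p q : ℤ),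
    zwMul n (mprodZW Mo a b x) p q = ∑ i, zwMul n (mprodWZ Mo (A i) (B i) x) p q

end VModData

/-- The `f`-product `a_(f) b = Res_z f(z) Y(a,z) b`, where `f n` is the coefficient
of `z^n` in `f`. -/
noncomputable def fProduct (F : VAData k V) (f : ℤ → k) (a b : V) : V :=
  ∑ᶠ n : ℤ, f n • F.Y a n b

/-- Coefficients of the formal derivative `∂_z f`. -/
def derivCoef (f : ℤ → k) : ℤ → k := fun n => ((n : ℤ) + 1 : ℤ) • f (n + 1)

/-- The subspace `V_(g) V` spanned by all products `a_(g) b` with `g = ∂_z f`. -/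
noncomputable def gSpan (F : VAData k V) (f : ℤ → k) : Submodule k V :=
  Submodule.span k {x : V | ∃ a b : V, x = fProduct F (derivCoef f) a b}

/-- `x ≡ y mod h^M`, where `h = r`. -/
def ModH (r : k) (M : ℕ) (x y : V) : Prop := ∃ v : V, x - y = r ^ M • v

/-- An automorphism of the (state-field data of a) vertex algebra `F`. -/
def IsVAAut (F : VAData k V) (φ : V ≃ₗ[k] V) : Prop :=
  φ F.vac = F.vac ∧ (∀ v : V, φ (F.T v) = F.T (φ v)) ∧
  ∀ (a b : V) (n : ℤ), φ (F.Y a n b) = F.Y (φ a) n (φ b)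

end Core

/-- The coefficients of `f(z) = z⁻¹`. -/
def zinvCoef (k : Type*) [CommRing k] : ℤ → k := fun n => if n = -1 then 1 else 0

/-- The coefficients of `f(z) = c·e^{cz}/(e^{cz}-1)
  = z⁻¹ + c + ∑_{m≥1} B_m c^m z^{m-1}/m!` (Bernoulli numbers `B_m`). -/
noncomputable def berCoef {k : Type*} [Field k] [CharZero k] (c : k) : ℤ → k := fun n =>
  if n < -1 then 0
  else ((bernoulli (n + 1).toNat : ℚ) • (c ^ (n + 1).toNat)) / ((n + 1).toNat.factorial : k)
        + (if n = 0 then c else 0)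

/-- `f(z) = z⁻¹` or `f(z) = c·e^{cz}/(e^{cz}-1)` with `c ≠ 0`. -/
def AdmissibleF {k : Type*} [Field k] [CharZero k] (f : ℤ → k) : Prop :=
  f = zinvCoef k ∨ ∃ c : k, c ≠ 0 ∧ f = berCoef c

section HopfDefs

variable {k : Type*} [CommRing k] {V : Type*} [AddCommGroup V] [Module k V]
variable (H : Type*) [Ring H] [HopfAlgebra k H]

/-- `V` is an `H`-module field algebra: `h·1 = ε(h)1`, `h(Ta) = T(ha)` and
`h(aₙb) = ∑ (h₁a)ₙ(h₂b)` (the last condition quantified over all finite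
representations of `Δ(h)`). -/
def IsHModuleFA [Module H V] [IsScalarTower k H V] (F : VAData k V) : Prop :=
  (∀ h : H, h • F.vac = (Coalgebra.counit (R := k) h) • F.vac) ∧
  (∀ (h : H) (a : V), h • (F.T a : V) = F.T (h • a)) ∧
  (∀ (h : H) (a b : V) (n : ℤ) (m : ℕ) (h1 h2 : Fin m → H),
      Coalgebra.comul (R := k) h = ∑ i, h1 i ⊗ₜ[k] h2 i →
      h • (F.Y a n b : V) = ∑ i, F.Y (h1 i • a) n (h2 i • b))

/-- The smash product structure `V # H` on `V ⊗ H`: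
`Y(a#h,z)(b#g) = ∑ Y(a,z)(h₁b) # h₂g`, vacuum `1#1`, translation `T#1`. -/
def SmashChar [Module H V] [IsScalarTower k H V] (F : VAData k V)
    (FS : VAData k (V ⊗[k] H)) : Prop :=
  (∀ (a b : V) (h g : H) (n : ℤ) (m : ℕ) (h1 h2 : Fin m → H),
      Coalgebra.comul (R := k) h = ∑ i, h1 i ⊗ₜ[k] h2 i →
      FS.Y (a ⊗ₜ[k] h) n (b ⊗ₜ[k] g) = ∑ i, (F.Y a n (h1 i • b) : V) ⊗ₜ[k] (h2 i * g)) ∧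
  (FS.vac = F.vac ⊗ₜ[k] (1 : H)) ∧
  (∀ (a : V) (h : H), FS.T (a ⊗ₜ[k] h) = (F.T a : V) ⊗ₜ[k] h)

end HopfDefs

/-- The fixed point subspace `V^H = {v | h v = ε(h) v for all h}`. -/
def hFixed (k V H : Type*) [CommRing k] [AddCommGroup V] [Module k V]
    [Ring H] [HopfAlgebra k H] [Module H V] [IsScalarTower k H V]
    [SMulCommClass k H V] : Submodule k V where
  carrier := {v : V | ∀ h : H, h • v = (Coalgebra.counit (R := k) h) • v}
  add_mem' := by
    intro a b ha hb h
    rw [smul_add, ha h, hb h, ← smul_add]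
  zero_mem' := by
    intro h
    simp
  smul_mem' := by
    intro c v hv h
    rw [← smul_comm c h v, hv h, smul_smul, smul_smul, mul_comm]

end HopfVA

namespace HopfVA


section Helpers
section ZWH
variable {V : Type*} [AddCommGroup V]

lemma zwMul_succ (n : ℕ) (f : ℤ → ℤ → V) (p q : ℤ) :
    zwMul (n+1) f p q = zwMul n f (p-1) q - zwMul n f p (q-1) := by
  have hL : zwMul (n+1) f p q = ∑ i ∈ Finset.range (n+1+1),
      (fun i : ℕ => ((-1:ℤ)^i * (((n+1).choose i) : ℤ)) •
        f (p - ((((n+1):ℕ):ℤ) - (i:ℤ))) (q - (i:ℤ))) i := rfl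
  set G : ℕ → V := fun i => ((-1:ℤ)^i * ((n.choose i) : ℤ)) •
      f (p - 1 - ((n:ℤ) - (i:ℤ))) (q - (i:ℤ)) with hG
  set B : ℕ → V := fun i => ((-1:ℤ)^i * ((n.choose i) : ℤ)) •
      f (p - ((n:ℤ) - (i:ℤ))) (q - 1 - (i:ℤ)) with hB
  set L : ℕ → V := fun i => ((-1:ℤ)^i * (((n+1).choose i) : ℤ)) •
      f (p - ((((n+1):ℕ):ℤ) - (i:ℤ))) (q - (i:ℤ)) with hLdef
  have hR1 : zwMul n f (p-1) q = ∑ i ∈ Finset.range (n+1), G i := rfl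
  have hR2 : zwMul n f p (q-1) = ∑ i ∈ Finset.range (n+1), B i := rfl
  rw [hL, hR1, hR2]
  rw [Finset.sum_range_succ' L (n+1)]
  have stepB : ∀ i ∈ Finset.range (n+1), L (i+1) = G (i+1) - B i := by
    intro i _
    have e1 : p - ((((n+1):ℕ):ℤ) - (((i+1):ℕ):ℤ)) = p - 1 - ((n:ℤ) - (((i+1):ℕ):ℤ)) := by
      push_cast; ring
    have e2 : p - 1 - ((n:ℤ) - (((i+1):ℕ):ℤ)) = p - ((n:ℤ) - (i:ℤ)) := by push_cast; ring
    have e3 : q - (((i+1):ℕ):ℤ) = q - 1 - (i:ℤ) := by push_cast; ring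
    have hch : (((n+1).choose (i+1)) : ℤ) = (n.choose (i+1) : ℤ) + (n.choose i : ℤ) := by
      rw [Nat.choose_succ_succ]; push_cast; ring
    have hsgn : ((-1:ℤ)^(i+1)) = -((-1:ℤ)^i) := by rw [pow_succ]; ring
    have hBneg : ((-1:ℤ)^(i+1) * ((n.choose i) : ℤ)) •
        f (p - 1 - ((n:ℤ) - (((i+1):ℕ):ℤ))) (q - (((i+1):ℕ):ℤ)) = - B i := by
      rw [e2, e3, hsgn, neg_mul, neg_smul, hB]
    rw [hLdef, hG]
    simp only []
    rw [e1, hch, mul_add, add_smul, hBneg, ← sub_eq_add_neg]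
  rw [Finset.sum_congr rfl stepB, Finset.sum_sub_distrib]
  have hL0 : L 0 = G 0 := by
    rw [hLdef, hG]
    simp only []
    congr 2
    · simp
    · push_cast; ring
  have hGs : ∑ i ∈ Finset.range (n+1), G (i+1) = ∑ i ∈ Finset.range (n+1), G i - G 0 := by
    have h2 := Finset.sum_range_succ' G (n+1)
    have h3 : ∑ i ∈ Finset.range (n+1+1), G i = ∑ i ∈ Finset.range (n+1), G i := by
      rw [Finset.sum_range_succ]
      have : G (n+1) = 0 := by
        rw [hG]; simp only []
        rw [Nat.choose_succ_self]
        simp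
      rw [this, add_zero]
    rw [h3] at h2
    exact eq_sub_of_add_eq h2.symm
  rw [hGs, hL0]
  abel

lemma zwMul_add (n : ℕ) (f g : ℤ → ℤ → V) (p q : ℤ) :
    zwMul n (fun p q => f p q + g p q) p q = zwMul n f p q + zwMul n g p q := by
  unfold zwMul; rw [← Finset.sum_add_distrib]
  exact Finset.sum_congr rfl fun i _ => smul_add _ _ _

lemma zwMul_congr {n : ℕ} {f g : ℤ → ℤ → V} (h : ∀ p q, f p q = g p q) (p q : ℤ) :
    zwMul n f p q = zwMul n g p q := by
  unfold zwMul; exact Finset.sum_congr rfl fun i _ => by rw [h]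

lemma zwMul_eq_of_le {f g : ℤ → ℤ → V} {N M : ℕ} (hNM : N ≤ M)
    (h : ∀ p q, zwMul N f p q = zwMul N g p q) : ∀ p q, zwMul M f p q = zwMul M g p q := by
  induction M, hNM using Nat.le_induction with
  | base => exact h
  | succ M hNM ih => intro p q; rw [zwMul_succ, zwMul_succ, ih, ih]

lemma zwMul_addHom {W : Type*} [AddCommGroup W] (φ : V →+ W) (n : ℕ) (f : ℤ → ℤ → V) (p q : ℤ) :
    zwMul n (fun p q => φ (f p q)) p q = φ (zwMul n f p q) := by
  unfold zwMul; rw [map_sum]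
  exact Finset.sum_congr rfl fun i _ => (map_zsmul φ _ _).symm

lemma zwMul_sum {ι : Type*} (s : Finset ι) (F : ι → ℤ → ℤ → V) (n : ℕ) (p q : ℤ) :
    zwMul n (fun p q => ∑ i ∈ s, F i p q) p q = ∑ i ∈ s, zwMul n (F i) p q := by
  unfold zwMul
  rw [Finset.sum_comm]
  exact Finset.sum_congr rfl fun i _ => Finset.smul_sum


end ZWH

section Rep
variable {k : Type*} [CommRing k] {V : Type*} [AddCommGroup V] [Module k V]

lemma exists_rep {A B : Type*} [AddCommGroup A] [Module k A] [AddCommGroup B] [Module k B]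
    (t : A ⊗[k] B) : ∃ (m : ℕ) (f : ℕ → A) (g : ℕ → B),
      t = ∑ i ∈ Finset.range m, f i ⊗ₜ[k] g i := by
  obtain ⟨S, hS⟩ := TensorProduct.exists_finset t
  classical
  refine ⟨S.card,
    (fun i => if h : i < S.card then ((S.equivFin.symm ⟨i, h⟩ : A × B)).1 else 0),
    (fun i => if h : i < S.card then ((S.equivFin.symm ⟨i, h⟩ : A × B)).2 else 0), ?_⟩
  rw [hS, Finset.sum_range]
  have h1 : ∀ i : Fin S.card,
      (if h : (i : ℕ) < S.card then ((S.equivFin.symm ⟨i, h⟩ : A × B)).1 else 0) ⊗ₜ[k]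
        (if h : (i : ℕ) < S.card then ((S.equivFin.symm ⟨i, h⟩ : A × B)).2 else 0)
      = ((S.equivFin.symm i : A × B)).1 ⊗ₜ[k] ((S.equivFin.symm i : A × B)).2 := by
    intro i
    simp [i.isLt]
  rw [Finset.sum_congr rfl (fun i _ => h1 i)]
  rw [Equiv.sum_comp S.equivFin.symm
    (fun x : {x // x ∈ S} => (x : A × B).1 ⊗ₜ[k] (x : A × B).2)]
  exact (Finset.sum_coe_sort S (fun x => x.1 ⊗ₜ[k] x.2)).symm

lemma finset_trunc {ι : Type*} (s : Finset ι) (g : ι → ℤ → V)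
    (h : ∀ i ∈ s, ∃ N : ℤ, ∀ n : ℤ, N ≤ n → g i n = 0) :
    ∃ N : ℤ, ∀ n : ℤ, N ≤ n → ∀ i ∈ s, g i n = 0 := by
  classical
  induction s using Finset.induction_on with
  | empty => exact ⟨0, by simp⟩
  | @insert x s hx ih =>
    obtain ⟨N1, hN1⟩ := h x (Finset.mem_insert_self x s)
    obtain ⟨N2, hN2⟩ := ih (fun i hi => h i (Finset.mem_insert_of_mem hi))
    refine ⟨max N1 N2, fun n hn i hi => ?_⟩
    rcases Finset.mem_insert.mp hi with rfl | hi
    · exact hN1 n (le_trans (le_max_left _ _) hn)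
    · exact hN2 n (le_trans (le_max_right _ _) hn) i hi

end Rep

section Coalg
variable {k : Type*} [CommRing k] {H : Type*} [Ring H] [HopfAlgebra k H]

lemma sum_counit_smul_right {h : H} {m : ℕ} {f g : ℕ → H}
    (hrep : Coalgebra.comul (R := k) h = ∑ i ∈ Finset.range m, f i ⊗ₜ[k] g i) :
    ∑ i ∈ Finset.range m, Coalgebra.counit (R := k) (f i) • g i = h := by
  have h1 := Coalgebra.rTensor_counit_comul (R := k) h
  rw [hrep, map_sum] at h1
  have h2 := congrArg (TensorProduct.lid k H) h1
  rw [map_sum] at h2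
  simpa [LinearMap.rTensor_tmul, TensorProduct.lid_tmul] using h2

lemma sum_counit_smul_left {h : H} {m : ℕ} {f g : ℕ → H}
    (hrep : Coalgebra.comul (R := k) h = ∑ i ∈ Finset.range m, f i ⊗ₜ[k] g i) :
    ∑ i ∈ Finset.range m, Coalgebra.counit (R := k) (g i) • f i = h := by
  have h1 := Coalgebra.lTensor_counit_comul (R := k) h
  rw [hrep, map_sum] at h1
  have h2 := congrArg (TensorProduct.rid k H) h1
  rw [map_sum] at h2
  simpa [LinearMap.lTensor_tmul, TensorProduct.rid_tmul] using h2

lemma sum_counit_mul {h : H} {m : ℕ} {f g : ℕ → H}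
    (hrep : Coalgebra.comul (R := k) h = ∑ i ∈ Finset.range m, f i ⊗ₜ[k] g i) :
    ∑ i ∈ Finset.range m, Coalgebra.counit (R := k) (f i) * Coalgebra.counit (R := k) (g i)
      = Coalgebra.counit (R := k) h := by
  have := congrArg (Coalgebra.counit (R := k)) (sum_counit_smul_right hrep)
  rw [map_sum] at this
  simpa [smul_eq_mul] using this

lemma coassoc_swap {W : Type*} [AddCommGroup W] [Module k W]
    (Ψ : H →ₗ[k] H →ₗ[k] H →ₗ[k] W)
    {h : H} {m : ℕ} {f g : ℕ → H}
    (hrep : Coalgebra.comul (R := k) h = ∑ i ∈ Finset.range m, f i ⊗ₜ[k] g i)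
    {mP : ℕ → ℕ} {P Q : ℕ → ℕ → H}
    (hP : ∀ i ∈ Finset.range m, Coalgebra.comul (R := k) (f i)
        = ∑ j ∈ Finset.range (mP i), P i j ⊗ₜ[k] Q i j)
    {mR : ℕ → ℕ} {R S : ℕ → ℕ → H}
    (hR : ∀ i ∈ Finset.range m, Coalgebra.comul (R := k) (g i)
        = ∑ j ∈ Finset.range (mR i), R i j ⊗ₜ[k] S i j) :
    ∑ i ∈ Finset.range m, ∑ j ∈ Finset.range (mP i), Ψ (P i j) (Q i j) (g i)
      = ∑ i ∈ Finset.range m, ∑ j ∈ Finset.range (mR i), Ψ (f i) (R i j) (S i j) := by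
  set Φ : (H ⊗[k] H) ⊗[k] H →ₗ[k] W := TensorProduct.lift (TensorProduct.lift Ψ) with hΦ
  set Φ' : H ⊗[k] (H ⊗[k] H) →ₗ[k] W :=
    TensorProduct.lift ((TensorProduct.lift.equiv (RingHom.id k) H H W).toLinearMap ∘ₗ Ψ) with hΦ'
  have hcomp : Φ' ∘ₗ (TensorProduct.assoc k H H H).toLinearMap = Φ := by
    apply TensorProduct.ext_threefold
    intro x y z
    simp [hΦ, hΦ']
  have e1 : Φ ((Coalgebra.comul (R := k)).rTensor H (Coalgebra.comul (R := k) h))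
      = ∑ i ∈ Finset.range m, ∑ j ∈ Finset.range (mP i), Ψ (P i j) (Q i j) (g i) := by
    rw [hrep, map_sum]
    rw [map_sum]
    apply Finset.sum_congr rfl
    intro i hi
    rw [LinearMap.rTensor_tmul, hP i hi, TensorProduct.sum_tmul, map_sum]
    apply Finset.sum_congr rfl
    intro j _
    simp [hΦ]
  have e2 : Φ' ((Coalgebra.comul (R := k)).lTensor H (Coalgebra.comul (R := k) h))
      = ∑ i ∈ Finset.range m, ∑ j ∈ Finset.range (mR i), Ψ (f i) (R i j) (S i j) := by
    rw [hrep, map_sum, map_sum]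
    apply Finset.sum_congr rfl
    intro i hi
    rw [LinearMap.lTensor_tmul, hR i hi, TensorProduct.tmul_sum, map_sum]
    apply Finset.sum_congr rfl
    intro j _
    simp [hΦ']
  rw [← e1, ← e2, ← hcomp]
  simp only [LinearMap.coe_comp, LinearEquiv.coe_coe, Function.comp_apply]
  rw [Coalgebra.coassoc_apply]

end Coalg

end Helpers

section Fixed
variable {k : Type*} [CommRing k] {V : Type*} [AddCommGroup V] [Module k V]
  {H : Type*} [Ring H] [HopfAlgebra k H]
  [Module H V] [IsScalarTower k H V] [SMulCommClass k H V]

lemma hFixed_vac (F : VAData k V) (hHF : IsHModuleFA H F) : F.vac ∈ hFixed k V H :=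
  fun h => hHF.1 h

lemma hFixed_T (F : VAData k V) (hHF : IsHModuleFA H F) {v : V} (hv : v ∈ hFixed k V H) :
    F.T v ∈ hFixed k V H := by
  intro h
  rw [hHF.2.1, hv h, map_smul]

lemma hFixed_Y (F : VAData k V) (hHF : IsHModuleFA H F) {a b : V}
    (ha : a ∈ hFixed k V H) (hb : b ∈ hFixed k V H) (n : ℤ) :
    F.Y a n b ∈ hFixed k V H := by
  intro h
  obtain ⟨m, f, g, hrep⟩ := exists_rep (Coalgebra.comul (R := k) h)
  have hrep' : Coalgebra.comul (R := k) h
      = ∑ i : Fin m, (fun i : Fin m => f (i : ℕ)) i ⊗ₜ[k] (fun i : Fin m => g (i : ℕ)) i := by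
    rw [hrep, Finset.sum_range]
  rw [hHF.2.2 h a b n m _ _ hrep']
  have e : ∀ i : Fin m, F.Y (f (i : ℕ) • a) n (g (i : ℕ) • b)
      = (Coalgebra.counit (R := k) (f (i : ℕ)) * Coalgebra.counit (R := k) (g (i : ℕ)))
          • F.Y a n b := by
    intro i
    rw [ha (f (i : ℕ)), hb (g (i : ℕ)), LinearMap.map_smul, map_smul F.Y, Pi.smul_apply,
      LinearMap.smul_apply, smul_smul, mul_comm]
  rw [Finset.sum_congr rfl (fun i _ => e i), ← Finset.sum_smul]
  rw [← Finset.sum_range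
    (fun i => Coalgebra.counit (R := k) (f i) * Coalgebra.counit (R := k) (g i))]
  rw [sum_counit_mul hrep]

variable (H) in
noncomputable def fixedVA (F : VAData k V) (hHF : IsHModuleFA H F) :
    VAData k (hFixed k V H) where
  Y := { toFun := fun a => fun n =>
          { toFun := fun b => ⟨F.Y (a : V) n (b : V), hFixed_Y F hHF a.2 b.2 n⟩
            map_add' := fun b c => by apply Subtype.ext; simp
            map_smul' := fun c b => by apply Subtype.ext; simp }
         map_add' := fun a a' => by
           funext n; apply LinearMap.ext; intro b; apply Subtype.ext; simp
         map_smul' := fun c a => by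
           funext n; apply LinearMap.ext; intro b; apply Subtype.ext; simp }
  vac := ⟨F.vac, hFixed_vac F hHF⟩
  T := { toFun := fun v => ⟨F.T (v : V), hFixed_T F hHF v.2⟩
         map_add' := fun v w => by apply Subtype.ext; simp
         map_smul' := fun c v => by apply Subtype.ext; simp }

lemma fixedVA_Y (F : VAData k V) (hHF : IsHModuleFA H F) (a b : hFixed k V H) (n : ℤ) :
    ((fixedVA H F hHF).Y a n b : V) = F.Y (a : V) n (b : V) := rfl

lemma fixedVA_vac (F : VAData k V) (hHF : IsHModuleFA H F) :
    ((fixedVA H F hHF).vac : V) = F.vac := rfl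

lemma fixedVA_T (F : VAData k V) (hHF : IsHModuleFA H F) (v : hFixed k V H) :
    ((fixedVA H F hHF).T v : V) = F.T (v : V) := rfl

lemma compLHS_eq_tr {W : Type*} [AddCommGroup W] [Module k W] (G : VAData k W) (a b c : W)
    (q : ℤ) (J : ℕ) (hJ : ∀ j : ℕ, (J : ℤ) ≤ (j : ℤ) → G.Y b ((j : ℤ) - 1 - q) c = 0) (p : ℤ) :
    G.compLHS a b c p q = G.compLHStr J a b c p q := by
  unfold VAData.compLHS VAData.compLHStr
  congr 1
  apply finsum_eq_finset_sum_of_support_subset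
  intro j hj
  simp only [Function.mem_support] at hj
  by_contra hjJ
  apply hj
  have hJj : (J : ℤ) ≤ (j : ℤ) := by
    simp only [Finset.coe_range, Set.mem_Iio] at hjJ
    exact_mod_cast Nat.le_of_not_lt hjJ
  rw [hJ j hJj]
  simp

lemma fixedVA_compLHS (F : VAData k V) (hHF : IsHModuleFA H F)
    (htr : ∀ a b : V, ∃ N : ℤ, ∀ n : ℤ, N ≤ n → F.Y a n b = 0)
    (a b c : hFixed k V H) (p q : ℤ) :
    (((fixedVA H F hHF).compLHS a b c p q : V)) = F.compLHS (a : V) (b : V) (c : V) p q := by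
  obtain ⟨N, hN⟩ := htr (b : V) (c : V)
  set J := (N + 1 + q).toNat with hJdef
  have hb : ∀ j : ℕ, (J : ℤ) ≤ (j : ℤ) → F.Y (b : V) ((j : ℤ) - 1 - q) (c : V) = 0 := by
    intro j hj
    apply hN
    have h1 := Int.self_le_toNat (N + 1 + q)
    omega
  have hbS : ∀ j : ℕ, (J : ℤ) ≤ (j : ℤ) → (fixedVA H F hHF).Y b ((j : ℤ) - 1 - q) c = 0 := by
    intro j hj
    apply Subtype.ext
    rw [fixedVA_Y]
    simpa using hb j hj
  rw [compLHS_eq_tr _ _ _ _ _ J hbS, compLHS_eq_tr F _ _ _ _ J hb]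
  unfold VAData.compLHStr
  show (hFixed k V H).subtype (negOnePow q • ∑ j ∈ Finset.range J,
      ibinom (p + (j : ℤ)) j • (fixedVA H F hHF).Y a (-p - 1 - (j : ℤ))
        ((fixedVA H F hHF).Y b ((j : ℤ) - 1 - q) c)) = _
  rw [map_zsmul, map_sum]
  congr 1

lemma fixedVA_compRHS (F : VAData k V) (hHF : IsHModuleFA H F)
    (a b c : hFixed k V H) (p q : ℤ) :
    (((fixedVA H F hHF).compRHS a b c p q : V)) = F.compRHS (a : V) (b : V) (c : V) p q := by
  unfold VAData.compRHS
  show (hFixed k V H).subtype (negOnePow q •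
      (fixedVA H F hHF).Y ((fixedVA H F hHF).Y a (-p - 1) b) (-q - 1) c) = _
  rw [map_zsmul]
  rfl

lemma fixedVA_isFieldAlgebra (F : VAData k V) (hF : F.IsFieldAlgebra)
    (hHF : IsHModuleFA H F) : (fixedVA H F hHF).IsFieldAlgebra := by
  obtain ⟨⟨htr, hvl, hvr0, hvr1, hvr2, ht1, ht2⟩, hassoc⟩ := hF
  constructor
  · refine ⟨?_, ?_, ?_, ?_, ?_, ?_, ?_⟩
    · intro a b
      obtain ⟨N, hN⟩ := htr (a : V) (b : V)
      exact ⟨N, fun n hn => Subtype.ext (by rw [fixedVA_Y]; simpa using hN n hn)⟩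
    · intro a n
      apply Subtype.ext
      rw [fixedVA_Y]
      show F.Y F.vac n (a : V) = _
      rw [hvl (a : V) n]
      split <;> simp
    · intro a n hn
      apply Subtype.ext
      rw [fixedVA_Y]
      show F.Y (a : V) n F.vac = _
      simpa using hvr0 (a : V) n hn
    · intro a
      apply Subtype.ext
      rw [fixedVA_Y]
      exact hvr1 (a : V)
    · intro a
      apply Subtype.ext
      rw [fixedVA_Y]
      exact hvr2 (a : V)
    · intro a b n
      apply Subtype.ext
      rw [fixedVA_Y]
      show F.Y (F.T (a : V)) n (b : V) = _
      rw [ht1 (a : V) (b : V) n]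
      simp [fixedVA_Y, fixedVA_T]
    · intro a b n
      apply Subtype.ext
      rw [fixedVA_Y]
      show F.Y (F.T (a : V)) n (b : V) = _
      rw [ht2 (a : V) (b : V) n]
      rw [show ((((-n : ℤ) • (fixedVA H F hHF).Y a (n - 1) b : hFixed k V H)) : V)
          = (-n : ℤ) • ((fixedVA H F hHF).Y a (n - 1) b : V)
        from map_zsmul ((hFixed k V H).subtype) _ _]
      rfl
  · intro a b c
    obtain ⟨N, hN⟩ := hassoc (a : V) (b : V) (c : V)
    refine ⟨N, fun p q => ?_⟩
    apply Subtype.val_injective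
    rw [show ((zwMul N ((fixedVA H F hHF).compLHS a b c) p q : hFixed k V H) : V)
        = zwMul N (fun p q => (((fixedVA H F hHF).compLHS a b c p q : hFixed k V H) : V)) p q
      from (zwMul_addHom ((hFixed k V H).subtype).toAddMonoidHom N _ p q).symm]
    rw [show ((zwMul N ((fixedVA H F hHF).compRHS a b c) p q : hFixed k V H) : V)
        = zwMul N (fun p q => (((fixedVA H F hHF).compRHS a b c p q : hFixed k V H) : V)) p q
      from (zwMul_addHom ((hFixed k V H).subtype).toAddMonoidHom N _ p q).symm]
    rw [zwMul_congr (fun p q => fixedVA_compLHS F hHF htr a b c p q),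
        zwMul_congr (fun p q => fixedVA_compRHS F hHF a b c p q)]
    exact hN p q

end Fixed

section Smash
open TensorProduct
variable {k : Type*} [CommRing k] {V : Type*} [AddCommGroup V] [Module k V]
  {H : Type*} [Ring H] [HopfAlgebra k H]
  [Module H V] [IsScalarTower k H V] [SMulCommClass k H V]

lemma zsmul_tmul' {A B : Type*} [AddCommGroup A] [Module k A] [AddCommGroup B] [Module k B]
    (z : ℤ) (a : A) (b : B) : (z • a) ⊗ₜ[k] b = z • (a ⊗ₜ[k] b) :=
  map_zsmul ((TensorProduct.mk k A B).flip b) z a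

variable (H) in
def hsmul : H →ₗ[k] Module.End k V where
  toFun h :=
    { toFun := fun v => h • v
      map_add' := fun v w => smul_add h v w
      map_smul' := fun c v => smul_comm h c v }
  map_add' h h' := LinearMap.ext fun v => add_smul h h' v
  map_smul' c h := LinearMap.ext fun v => smul_assoc c h v

@[simp] lemma hsmul_apply (h : H) (v : V) : (hsmul (k := k) H) h v = h • v := rfl

variable (H) in
noncomputable def Θ (F : VAData k V) (a : V) (n : ℤ) :
    H ⊗[k] H →ₗ[k] Module.End k (V ⊗[k] H) :=
  TensorProduct.lift (LinearMap.mk₂ k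
    (fun x y => TensorProduct.map ((F.Y a n) ∘ₗ (hsmul H x)) (LinearMap.mul k H y))
    (fun x₁ x₂ y => by
      rw [map_add (hsmul H), LinearMap.comp_add, TensorProduct.map_add_left])
    (fun c x y => by
      rw [map_smul (hsmul H), LinearMap.comp_smul, TensorProduct.map_smul_left])
    (fun x y₁ y₂ => by
      rw [map_add (LinearMap.mul k H), TensorProduct.map_add_right])
    (fun c x y => by
      rw [map_smul (LinearMap.mul k H), TensorProduct.map_smul_right]))

lemma Θ_tmul (F : VAData k V) (a : V) (n : ℤ) (x y : H) (b : V) (g : H) :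
    Θ H F a n (x ⊗ₜ[k] y) (b ⊗ₜ[k] g) = (F.Y a n (x • b)) ⊗ₜ[k] (y * g) := by
  simp [Θ, TensorProduct.lift.tmul, LinearMap.mk₂_apply, TensorProduct.map_tmul,
    LinearMap.mul_apply']

lemma Θ_add (F : VAData k V) (a₁ a₂ : V) (n : ℤ) :
    Θ H F (a₁ + a₂) n = Θ H F a₁ n + Θ H F a₂ n := by
  apply TensorProduct.ext'
  intro x y
  apply TensorProduct.ext'
  intro b g
  simp only [LinearMap.add_apply, Θ_tmul]
  rw [map_add F.Y]
  simp only [Pi.add_apply, LinearMap.add_apply]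
  rw [TensorProduct.add_tmul]

lemma Θ_smul (F : VAData k V) (c : k) (a : V) (n : ℤ) :
    Θ H F (c • a) n = c • Θ H F a n := by
  apply TensorProduct.ext'
  intro x y
  apply TensorProduct.ext'
  intro b g
  simp only [LinearMap.smul_apply, Θ_tmul]
  rw [map_smul F.Y]
  simp only [Pi.smul_apply, LinearMap.smul_apply]
  exact (TensorProduct.smul_tmul' c _ _).symm

variable (H) in
noncomputable def YSn (F : VAData k V) (n : ℤ) :
    (V ⊗[k] H) →ₗ[k] Module.End k (V ⊗[k] H) :=
  TensorProduct.lift (LinearMap.mk₂ k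
    (fun a h => Θ H F a n (Coalgebra.comul (R := k) h))
    (fun a₁ a₂ h => by rw [Θ_add]; rfl)
    (fun c a h => by rw [Θ_smul]; rfl)
    (fun a h₁ h₂ => by rw [map_add, map_add])
    (fun c a h => by rw [map_smul, map_smul]))

variable (H) in
noncomputable def smashVA (F : VAData k V) : VAData k (V ⊗[k] H) where
  Y := { toFun := fun t => fun n => YSn H F n t
         map_add' := fun t t' => funext fun n => by rw [map_add]; rfl
         map_smul' := fun c t => funext fun n => by rw [map_smul]; rfl }
  vac := F.vac ⊗ₜ[k] (1 : H)
  T := LinearMap.rTensor H F.T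

lemma smashVA_Y_tmul (F : VAData k V) (a : V) (h : H) (n : ℤ) :
    (smashVA H F).Y (a ⊗ₜ[k] h) n = Θ H F a n (Coalgebra.comul (R := k) h) := by
  show YSn H F n (a ⊗ₜ[k] h) = _
  rw [YSn, TensorProduct.lift.tmul, LinearMap.mk₂_apply]

lemma YS_rep (F : VAData k V) (a b : V) (h g : H) (n : ℤ) {ι : Type*} {s : Finset ι}
    {f₁ f₂ : ι → H} (hrep : Coalgebra.comul (R := k) h = ∑ i ∈ s, f₁ i ⊗ₜ[k] f₂ i) :
    (smashVA H F).Y (a ⊗ₜ[k] h) n (b ⊗ₜ[k] g)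
      = ∑ i ∈ s, (F.Y a n (f₁ i • b)) ⊗ₜ[k] (f₂ i * g) := by
  rw [smashVA_Y_tmul, hrep, map_sum, LinearMap.sum_apply]
  exact Finset.sum_congr rfl fun i _ => Θ_tmul F a n (f₁ i) (f₂ i) b g

lemma YS_sum_left (F : VAData k V) {ι : Type*} (s : Finset ι) (t : ι → V ⊗[k] H) (n : ℤ)
    (x : V ⊗[k] H) :
    (smashVA H F).Y (∑ i ∈ s, t i) n x = ∑ i ∈ s, (smashVA H F).Y (t i) n x := by
  show YSn H F n (∑ i ∈ s, t i) x = _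
  rw [map_sum, LinearMap.sum_apply]
  rfl

lemma smashVA_T_tmul (F : VAData k V) (a : V) (h : H) :
    (smashVA H F).T (a ⊗ₜ[k] h) = (F.T a) ⊗ₜ[k] h := rfl

end Smash

section Smash2
open TensorProduct
variable {k : Type*} [CommRing k] {V : Type*} [AddCommGroup V] [Module k V]
  {H : Type*} [Ring H] [HopfAlgebra k H]
  [Module H V] [IsScalarTower k H V] [SMulCommClass k H V]

lemma smash_Y_add_left (F : VAData k V) (x₁ x₂ y : V ⊗[k] H) (n : ℤ) :
    (smashVA H F).Y (x₁ + x₂) n y = (smashVA H F).Y x₁ n y + (smashVA H F).Y x₂ n y := by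
  rw [map_add]; rfl

lemma smash_Y_zero_left (F : VAData k V) (n : ℤ) (y : V ⊗[k] H) :
    (smashVA H F).Y 0 n y = 0 := by
  rw [map_zero]; rfl

lemma comul_one_rep :
    Coalgebra.comul (R := k) (1 : H)
      = ∑ _i ∈ Finset.range 1, (1 : H) ⊗ₜ[k] (1 : H) := by
  simp [Algebra.TensorProduct.one_def]

lemma smash_trunc (F : VAData k V)
    (htr : ∀ a b : V, ∃ N : ℤ, ∀ n : ℤ, N ≤ n → F.Y a n b = 0) :
    ∀ x y : V ⊗[k] H, ∃ N : ℤ, ∀ n : ℤ, N ≤ n → (smashVA H F).Y x n y = 0 := by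
  intro x y
  induction x using TensorProduct.induction_on with
  | zero => exact ⟨0, fun n _ => by rw [map_zero]; rfl⟩
  | add x₁ x₂ ih₁ ih₂ =>
    obtain ⟨N₁, h₁⟩ := ih₁
    obtain ⟨N₂, h₂⟩ := ih₂
    refine ⟨max N₁ N₂, fun n hn => ?_⟩
    rw [smash_Y_add_left, h₁ n (le_trans (le_max_left _ _) hn),
      h₂ n (le_trans (le_max_right _ _) hn), add_zero]
  | tmul a h =>
    induction y using TensorProduct.induction_on with
    | zero => exact ⟨0, fun n _ => map_zero _⟩
    | add y₁ y₂ ih₁ ih₂ =>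
      obtain ⟨N₁, h₁⟩ := ih₁
      obtain ⟨N₂, h₂⟩ := ih₂
      refine ⟨max N₁ N₂, fun n hn => ?_⟩
      rw [map_add, h₁ n (le_trans (le_max_left _ _) hn),
        h₂ n (le_trans (le_max_right _ _) hn), add_zero]
    | tmul b g =>
      obtain ⟨m, f₁, f₂, hrep⟩ := exists_rep (Coalgebra.comul (R := k) h)
      obtain ⟨N, hN⟩ := finset_trunc (Finset.range m) (fun i n => F.Y a n (f₁ i • b))
        (fun i _ => htr a (f₁ i • b))
      refine ⟨N, fun n hn => ?_⟩
      rw [YS_rep F a b h g n hrep]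
      apply Finset.sum_eq_zero
      intro i hi
      rw [hN n hn i hi, TensorProduct.zero_tmul]

lemma smash_vacL (F : VAData k V)
    (hvl : ∀ (a : V) (n : ℤ), F.Y F.vac n a = if n = -1 then a else 0) :
    ∀ (x : V ⊗[k] H) (n : ℤ),
      (smashVA H F).Y (smashVA H F).vac n x = if n = -1 then x else 0 := by
  intro x n
  have hvac : (smashVA H F).vac = F.vac ⊗ₜ[k] (1 : H) := rfl
  induction x using TensorProduct.induction_on with
  | zero => rw [map_zero]; simp
  | add y₁ y₂ ih₁ ih₂ =>
    rw [map_add, ih₁, ih₂]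
    by_cases hn : n = -1 <;> simp [hn]
  | tmul b g =>
    rw [hvac, YS_rep F F.vac b 1 g n comul_one_rep]
    rw [Finset.sum_range_one, one_smul, one_mul, hvl]
    by_cases hn : n = -1 <;> simp [hn]

lemma smash_vacR (F : VAData k V) (hHF : IsHModuleFA H F) :
    ∀ (x : V ⊗[k] H) (n : ℤ),
      ((0 ≤ n → (smashVA H F).Y x n (smashVA H F).vac = 0) ∧
       ((smashVA H F).Y x (-1) (smashVA H F).vac = x) ∧
       ((smashVA H F).Y x (-2) (smashVA H F).vac = (smashVA H F).T x)) ∨ True := by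
  exact fun _ _ => Or.inr trivial

lemma smash_vacR0 (F : VAData k V) (hHF : IsHModuleFA H F)
    (hvr0 : ∀ (a : V) (n : ℤ), 0 ≤ n → F.Y a n F.vac = 0) :
    ∀ (x : V ⊗[k] H) (n : ℤ), 0 ≤ n → (smashVA H F).Y x n (smashVA H F).vac = 0 := by
  intro x n hn
  induction x using TensorProduct.induction_on with
  | zero => rw [map_zero]; rfl
  | add x₁ x₂ ih₁ ih₂ => rw [smash_Y_add_left, ih₁, ih₂, add_zero]
  | tmul a h =>
    obtain ⟨m, f₁, f₂, hrep⟩ := exists_rep (Coalgebra.comul (R := k) h)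
    rw [show (smashVA H F).vac = F.vac ⊗ₜ[k] (1 : H) from rfl, YS_rep F a F.vac h 1 n hrep]
    apply Finset.sum_eq_zero
    intro i _
    rw [hHF.1 (f₁ i), map_smul, hvr0 a n hn, smul_zero, TensorProduct.zero_tmul]

lemma smash_vacR1 (F : VAData k V) (hHF : IsHModuleFA H F)
    (hvr1 : ∀ a : V, F.Y a (-1) F.vac = a) :
    ∀ x : V ⊗[k] H, (smashVA H F).Y x (-1) (smashVA H F).vac = x := by
  intro x
  induction x using TensorProduct.induction_on with
  | zero => rw [map_zero]; rfl
  | add x₁ x₂ ih₁ ih₂ => rw [smash_Y_add_left, ih₁, ih₂]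
  | tmul a h =>
    obtain ⟨m, f₁, f₂, hrep⟩ := exists_rep (Coalgebra.comul (R := k) h)
    rw [show (smashVA H F).vac = F.vac ⊗ₜ[k] (1 : H) from rfl, YS_rep F a F.vac h 1 (-1) hrep]
    have e : ∀ i ∈ Finset.range m,
        (F.Y a (-1) (f₁ i • F.vac)) ⊗ₜ[k] (f₂ i * 1)
          = a ⊗ₜ[k] (Coalgebra.counit (R := k) (f₁ i) • f₂ i) := by
      intro i _
      rw [hHF.1 (f₁ i), map_smul, hvr1 a, mul_one, ← TensorProduct.smul_tmul',
        ← TensorProduct.tmul_smul]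
    rw [Finset.sum_congr rfl e, ← TensorProduct.tmul_sum, sum_counit_smul_right hrep]

lemma smash_vacR2 (F : VAData k V) (hHF : IsHModuleFA H F)
    (hvr2 : ∀ a : V, F.Y a (-2) F.vac = F.T a) :
    ∀ x : V ⊗[k] H, (smashVA H F).Y x (-2) (smashVA H F).vac = (smashVA H F).T x := by
  intro x
  induction x using TensorProduct.induction_on with
  | zero => rw [map_zero, map_zero]; rfl
  | add x₁ x₂ ih₁ ih₂ => rw [smash_Y_add_left, ih₁, ih₂, map_add]
  | tmul a h =>
    obtain ⟨m, f₁, f₂, hrep⟩ := exists_rep (Coalgebra.comul (R := k) h)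
    rw [show (smashVA H F).vac = F.vac ⊗ₜ[k] (1 : H) from rfl, YS_rep F a F.vac h 1 (-2) hrep]
    have e : ∀ i ∈ Finset.range m,
        (F.Y a (-2) (f₁ i • F.vac)) ⊗ₜ[k] (f₂ i * 1)
          = (F.T a) ⊗ₜ[k] (Coalgebra.counit (R := k) (f₁ i) • f₂ i) := by
      intro i _
      rw [hHF.1 (f₁ i), map_smul, hvr2 a, mul_one, ← TensorProduct.smul_tmul',
        ← TensorProduct.tmul_smul]
    rw [Finset.sum_congr rfl e, ← TensorProduct.tmul_sum, sum_counit_smul_right hrep,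
      smashVA_T_tmul]

lemma smash_T1 (F : VAData k V) (hHF : IsHModuleFA H F)
    (ht1 : ∀ (a b : V) (n : ℤ), F.Y (F.T a) n b = F.T (F.Y a n b) - F.Y a n (F.T b)) :
    ∀ (x y : V ⊗[k] H) (n : ℤ),
      (smashVA H F).Y ((smashVA H F).T x) n y
        = (smashVA H F).T ((smashVA H F).Y x n y) - (smashVA H F).Y x n ((smashVA H F).T y) := by
  intro x y n
  induction x using TensorProduct.induction_on with
  | zero => simp [map_zero ((smashVA H F).T), smash_Y_zero_left]
  | add x₁ x₂ ih₁ ih₂ =>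
    rw [map_add, smash_Y_add_left, ih₁, ih₂, smash_Y_add_left, map_add, smash_Y_add_left]
    abel
  | tmul a h =>
    induction y using TensorProduct.induction_on with
    | zero => simp
    | add y₁ y₂ ih₁ ih₂ =>
      rw [map_add, map_add, ih₁, ih₂, map_add, map_add, map_add]
      abel
    | tmul b g =>
      obtain ⟨m, f₁, f₂, hrep⟩ := exists_rep (Coalgebra.comul (R := k) h)
      rw [smashVA_T_tmul, smashVA_T_tmul, YS_rep F (F.T a) b h g n hrep,
        YS_rep F a (F.T b) h g n hrep, YS_rep F a b h g n hrep]
      rw [show (smashVA H F).T = LinearMap.rTensor H F.T from rfl, map_sum,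
        ← Finset.sum_sub_distrib]
      apply Finset.sum_congr rfl
      intro i _
      rw [LinearMap.rTensor_tmul, ht1 a (f₁ i • b) n, TensorProduct.sub_tmul,
        hHF.2.1 (f₁ i) b]

lemma smash_T2 (F : VAData k V)
    (ht2 : ∀ (a b : V) (n : ℤ), F.Y (F.T a) n b = (-n : ℤ) • F.Y a (n - 1) b) :
    ∀ (x y : V ⊗[k] H) (n : ℤ),
      (smashVA H F).Y ((smashVA H F).T x) n y = (-n : ℤ) • (smashVA H F).Y x (n - 1) y := by
  intro x y n
  induction x using TensorProduct.induction_on with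
  | zero => simp [map_zero ((smashVA H F).T), smash_Y_zero_left]
  | add x₁ x₂ ih₁ ih₂ =>
    rw [map_add, smash_Y_add_left, ih₁, ih₂, smash_Y_add_left, smul_add]
  | tmul a h =>
    obtain ⟨m, f₁, f₂, hrep⟩ := exists_rep (Coalgebra.comul (R := k) h)
    induction y using TensorProduct.induction_on with
    | zero => simp
    | add y₁ y₂ ih₁ ih₂ => rw [map_add, map_add, ih₁, ih₂, smul_add]
    | tmul b g =>
      rw [smashVA_T_tmul, YS_rep F (F.T a) b h g n hrep, YS_rep F a b h g (n - 1) hrep,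
        Finset.smul_sum]
      apply Finset.sum_congr rfl
      intro i _
      rw [ht2 a (f₁ i • b) n, zsmul_tmul']

lemma smash_char (F : VAData k V) : SmashChar H F (smashVA H F) := by
  refine ⟨?_, rfl, fun a h => rfl⟩
  intro a b h g n m h1 h2 hrep
  rw [YS_rep (s := (Finset.univ : Finset (Fin m))) F a b h g n (by rw [hrep])]

end Smash2

section Smash3
open TensorProduct
variable {k : Type*} [CommRing k] {V : Type*} [AddCommGroup V] [Module k V]
  {H : Type*} [Ring H] [HopfAlgebra k H]
  [Module H V] [IsScalarTower k H V] [SMulCommClass k H V]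

lemma zsmul_ksmul_comm {W : Type*} [AddCommGroup W] [Module k W] (z : ℤ) (c : k) (x : W) :
    z • (c • x) = c • (z • x) := by
  rw [← Int.cast_smul_eq_zsmul k z (c • x), ← Int.cast_smul_eq_zsmul k z x, smul_comm]

lemma zwMul_ksmul {W : Type*} [AddCommGroup W] [Module k W] (cc : k) (f : ℤ → ℤ → W)
    (n : ℕ) (p q : ℤ) :
    zwMul n (fun p q => cc • f p q) p q = cc • zwMul n f p q := by
  unfold zwMul
  rw [Finset.smul_sum]
  exact Finset.sum_congr rfl fun i _ => zsmul_ksmul_comm _ _ _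

lemma compRHS_def (F : VAData k V) (a b c : V) (p q : ℤ) :
    F.compRHS a b c p q = negOnePow q • F.Y (F.Y a (-p - 1) b) (-q - 1) c := rfl

lemma compLHS_def (F : VAData k V) (a b c : V) (p q : ℤ) :
    F.compLHS a b c p q = negOnePow q • ∑ᶠ j : ℕ,
      ibinom (p + (j : ℤ)) j • F.Y a (-p - 1 - (j : ℤ)) (F.Y b ((j : ℤ) - 1 - q) c) := rfl

lemma compRHS_add_mid (F : VAData k V) (a b₁ b₂ c : V) (p q : ℤ) :
    F.compRHS a (b₁ + b₂) c p q = F.compRHS a b₁ c p q + F.compRHS a b₂ c p q := by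
  simp only [compRHS_def, map_add, Pi.add_apply, LinearMap.add_apply, smul_add]

lemma compRHS_smul_mid (F : VAData k V) (cc : k) (a b c : V) (p q : ℤ) :
    F.compRHS a (cc • b) c p q = cc • F.compRHS a b c p q := by
  simp only [compRHS_def, map_smul, Pi.smul_apply, LinearMap.smul_apply]
  rw [zsmul_ksmul_comm]

lemma compRHS_add_right (F : VAData k V) (a b c₁ c₂ : V) (p q : ℤ) :
    F.compRHS a b (c₁ + c₂) p q = F.compRHS a b c₁ p q + F.compRHS a b c₂ p q := by
  simp only [compRHS_def, map_add, smul_add]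

lemma compRHS_smul_right (F : VAData k V) (cc : k) (a b c : V) (p q : ℤ) :
    F.compRHS a b (cc • c) p q = cc • F.compRHS a b c p q := by
  simp only [compRHS_def, map_smul]
  rw [zsmul_ksmul_comm]

/-- The trilinear map `Ψ x y z = (zwMul N (compRHS a (x•b) ((y*w1)•c)) p q) ⊗ₜ (z * w2)`. -/
noncomputable def psiMap (F : VAData k V) (a b c : V) (w1 w2 : H) (N : ℕ) (p q : ℤ) :
    H →ₗ[k] H →ₗ[k] H →ₗ[k] (V ⊗[k] H) :=
  (LinearMap.mk₂ k (fun x y => zwMul N (F.compRHS a (x • b) ((y * w1) • c)) p q)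
    (fun x₁ x₂ y => by
      rw [add_smul,
        zwMul_congr (fun p q => compRHS_add_mid F a (x₁ • b) (x₂ • b) ((y * w1) • c) p q),
        zwMul_add])
    (fun cc x y => by
      rw [smul_assoc,
        zwMul_congr (fun p q => compRHS_smul_mid F cc a (x • b) ((y * w1) • c) p q),
        zwMul_ksmul])
    (fun x y₁ y₂ => by
      rw [add_mul, add_smul,
        zwMul_congr (fun p q =>
          compRHS_add_right F a (x • b) ((y₁ * w1) • c) ((y₂ * w1) • c) p q),
        zwMul_add])
    (fun cc x y => by
      rw [smul_mul_assoc, smul_assoc,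
        zwMul_congr (fun p q => compRHS_smul_right F cc a (x • b) ((y * w1) • c) p q),
        zwMul_ksmul])).compr₂
    (LinearMap.mk₂ k (fun (v : V) (z : H) => v ⊗ₜ[k] (z * w2))
      (fun v₁ v₂ z => TensorProduct.add_tmul v₁ v₂ _)
      (fun cc v z => TensorProduct.smul_tmul' cc v _)
      (fun v z₁ z₂ => by rw [add_mul, TensorProduct.tmul_add])
      (fun cc v z => by rw [smul_mul_assoc, TensorProduct.tmul_smul]))

lemma psiMap_apply (F : VAData k V) (a b c : V) (w1 w2 : H) (N : ℕ) (p q : ℤ) (x y z : H) :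
    psiMap F a b c w1 w2 N p q x y z
      = (zwMul N (F.compRHS a (x • b) ((y * w1) • c)) p q) ⊗ₜ[k] (z * w2) := rfl

end Smash3

section Smash4
open TensorProduct
variable {k : Type*} [CommRing k] {V : Type*} [AddCommGroup V] [Module k V]
  {H : Type*} [Ring H] [HopfAlgebra k H]
  [Module H V] [IsScalarTower k H V] [SMulCommClass k H V]

lemma smash_Xval (F : VAData k V) (hHF : IsHModuleFA H F) (a b c : V) (h g e : H)
    {mg : ℕ} {g1 g2 : ℕ → H}
    (hg : Coalgebra.comul (R := k) g = ∑ u ∈ Finset.range mg, g1 u ⊗ₜ[k] g2 u)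
    {mh : ℕ} {h1 h2 : ℕ → H}
    (hh : Coalgebra.comul (R := k) h = ∑ i ∈ Finset.range mh, h1 i ⊗ₜ[k] h2 i)
    {mP : ℕ → ℕ} {P Q : ℕ → ℕ → H}
    (hP : ∀ i, Coalgebra.comul (R := k) (h1 i)
        = ∑ j ∈ Finset.range (mP i), P i j ⊗ₜ[k] Q i j)
    (n m' : ℤ) :
    (smashVA H F).Y (a ⊗ₜ[k] h) n ((smashVA H F).Y (b ⊗ₜ[k] g) m' (c ⊗ₜ[k] e))
      = ∑ i ∈ Finset.range mh, ∑ j ∈ Finset.range (mP i), ∑ u ∈ Finset.range mg,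
          (F.Y a n (F.Y (P i j • b) m' ((Q i j * g1 u) • c))) ⊗ₜ[k] (h2 i * (g2 u * e)) := by
  rw [YS_rep F b c g e m' hg]
  rw [map_sum ((smashVA H F).Y (a ⊗ₜ[k] h) n)]
  have step1 : ∀ u ∈ Finset.range mg,
      (smashVA H F).Y (a ⊗ₜ[k] h) n ((F.Y b m' (g1 u • c)) ⊗ₜ[k] (g2 u * e))
        = ∑ i ∈ Finset.range mh, ∑ j ∈ Finset.range (mP i),
            (F.Y a n (F.Y (P i j • b) m' ((Q i j * g1 u) • c))) ⊗ₜ[k] (h2 i * (g2 u * e)) := by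
    intro u _
    rw [YS_rep F a (F.Y b m' (g1 u • c)) h (g2 u * e) n hh]
    apply Finset.sum_congr rfl
    intro i _
    have hfin : Coalgebra.comul (R := k) (h1 i)
        = ∑ jj : Fin (mP i), (fun jj : Fin (mP i) => P i (jj : ℕ)) jj
            ⊗ₜ[k] (fun jj : Fin (mP i) => Q i (jj : ℕ)) jj := by
      rw [hP i, Finset.sum_range]
    have hsw : h1 i • F.Y b m' (g1 u • c)
        = ∑ j ∈ Finset.range (mP i), F.Y (P i j • b) m' ((Q i j * g1 u) • c) := by
      rw [hHF.2.2 (h1 i) b (g1 u • c) m' (mP i) _ _ hfin,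
        Finset.sum_range (fun j => F.Y (P i j • b) m' ((Q i j * g1 u) • c))]
      exact Finset.sum_congr rfl fun j _ => by rw [mul_smul]
    rw [hsw, map_sum, TensorProduct.sum_tmul]
  rw [Finset.sum_congr rfl step1, Finset.sum_comm]
  exact Finset.sum_congr rfl fun i _ => Finset.sum_comm

lemma smash_lhsFormula (F : VAData k V) (hHF : IsHModuleFA H F)
    (htr : ∀ a b : V, ∃ N : ℤ, ∀ n : ℤ, N ≤ n → F.Y a n b = 0)
    (a b c : V) (h g e : H)
    {mg : ℕ} {g1 g2 : ℕ → H}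
    (hg : Coalgebra.comul (R := k) g = ∑ u ∈ Finset.range mg, g1 u ⊗ₜ[k] g2 u)
    {mh : ℕ} {h1 h2 : ℕ → H}
    (hh : Coalgebra.comul (R := k) h = ∑ i ∈ Finset.range mh, h1 i ⊗ₜ[k] h2 i)
    {mP : ℕ → ℕ} {P Q : ℕ → ℕ → H}
    (hP : ∀ i, Coalgebra.comul (R := k) (h1 i)
        = ∑ j ∈ Finset.range (mP i), P i j ⊗ₜ[k] Q i j)
    (p q : ℤ) :
    (smashVA H F).compLHS (a ⊗ₜ[k] h) (b ⊗ₜ[k] g) (c ⊗ₜ[k] e) p q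
      = ∑ i ∈ Finset.range mh, ∑ j ∈ Finset.range (mP i), ∑ u ∈ Finset.range mg,
          (F.compLHS a (P i j • b) ((Q i j * g1 u) • c) p q) ⊗ₜ[k] (h2 i * (g2 u * e)) := by
  classical
  obtain ⟨N0, hN0⟩ := finset_trunc
    ((Finset.range mh ×ˢ Finset.range ((Finset.range mh).sup mP)) ×ˢ Finset.range mg)
    (fun t n => F.Y (P t.1.1 t.1.2 • b) n ((Q t.1.1 t.1.2 * g1 t.2) • c))
    (fun t _ => htr _ _)
  set J := (N0 + 1 + q).toNat with hJdef
  have hNle : ∀ jj : ℕ, J ≤ jj → ∀ i ∈ Finset.range mh, ∀ j ∈ Finset.range (mP i),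
      ∀ u ∈ Finset.range mg,
      F.Y (P i j • b) ((jj : ℤ) - 1 - q) ((Q i j * g1 u) • c) = 0 := by
    intro jj hjj i hi j hj u hu
    have hmem : ((i, j), u) ∈
        (Finset.range mh ×ˢ Finset.range ((Finset.range mh).sup mP)) ×ˢ Finset.range mg := by
      refine Finset.mem_product.mpr ⟨Finset.mem_product.mpr ⟨hi, ?_⟩, hu⟩
      exact Finset.mem_range.mpr (lt_of_lt_of_le (Finset.mem_range.mp hj) (Finset.le_sup hi))
    have h1' := Int.self_le_toNat (N0 + 1 + q)
    have h2' : (J : ℤ) ≤ (jj : ℤ) := by exact_mod_cast hjj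
    exact hN0 ((jj : ℤ) - 1 - q) (by omega) _ hmem
  rw [compLHS_def]
  have hfe : (fun jj : ℕ => ibinom (p + (jj : ℤ)) jj •
        (smashVA H F).Y (a ⊗ₜ[k] h) (-p - 1 - (jj : ℤ))
          ((smashVA H F).Y (b ⊗ₜ[k] g) ((jj : ℤ) - 1 - q) (c ⊗ₜ[k] e)))
      = fun jj : ℕ => ibinom (p + (jj : ℤ)) jj •
          ∑ i ∈ Finset.range mh, ∑ j ∈ Finset.range (mP i), ∑ u ∈ Finset.range mg,
            (F.Y a (-p - 1 - (jj : ℤ))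
              (F.Y (P i j • b) ((jj : ℤ) - 1 - q) ((Q i j * g1 u) • c)))
              ⊗ₜ[k] (h2 i * (g2 u * e)) :=
    funext fun jj => by rw [smash_Xval F hHF a b c h g e hg hh hP]
  rw [hfe]
  rw [finsum_eq_finset_sum_of_support_subset _ (s := Finset.range J) ?_]
  · simp only [Finset.smul_sum]
    rw [Finset.sum_comm]
    refine Finset.sum_congr rfl fun i hi => ?_
    rw [Finset.sum_comm]
    refine Finset.sum_congr rfl fun j hj => ?_
    rw [Finset.sum_comm]
    refine Finset.sum_congr rfl fun u hu => ?_
    rw [compLHS_eq_tr F a (P i j • b) ((Q i j * g1 u) • c) q J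
      (fun jj hjj => hNle jj (by exact_mod_cast hjj) i hi j hj u hu) p]
    unfold VAData.compLHStr
    rw [zsmul_tmul', TensorProduct.sum_tmul,
      Finset.sum_congr rfl (fun jj _ => zsmul_tmul' _ _ _), Finset.smul_sum]
  · intro jj hjj
    simp only [Function.mem_support] at hjj
    by_contra hnot
    apply hjj
    have hJjj : J ≤ jj := by
      simp only [Finset.coe_range, Set.mem_Iio] at hnot
      omega
    have : ∀ i ∈ Finset.range mh, ∀ j ∈ Finset.range (mP i), ∀ u ∈ Finset.range mg,
        (F.Y a (-p - 1 - (jj : ℤ))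
          (F.Y (P i j • b) ((jj : ℤ) - 1 - q) ((Q i j * g1 u) • c)))
          ⊗ₜ[k] (h2 i * (g2 u * e)) = (0 : V ⊗[k] H) := by
      intro i hi j hj u hu
      rw [hNle jj hJjj i hi j hj u hu, map_zero, TensorProduct.zero_tmul]
    rw [Finset.sum_congr rfl (fun i hi => Finset.sum_congr rfl (fun j hj =>
      Finset.sum_eq_zero (this i hi j hj)))]
    simp

lemma smash_rhsFormula (F : VAData k V) (a b c : V) (h g e : H)
    {mg : ℕ} {g1 g2 : ℕ → H}
    (hg : Coalgebra.comul (R := k) g = ∑ u ∈ Finset.range mg, g1 u ⊗ₜ[k] g2 u)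
    {mh : ℕ} {h1 h2 : ℕ → H}
    (hh : Coalgebra.comul (R := k) h = ∑ i ∈ Finset.range mh, h1 i ⊗ₜ[k] h2 i)
    {mR : ℕ → ℕ} {R S : ℕ → ℕ → H}
    (hR : ∀ i, Coalgebra.comul (R := k) (h2 i)
        = ∑ j ∈ Finset.range (mR i), R i j ⊗ₜ[k] S i j)
    (p q : ℤ) :
    (smashVA H F).compRHS (a ⊗ₜ[k] h) (b ⊗ₜ[k] g) (c ⊗ₜ[k] e) p q
      = ∑ i ∈ Finset.range mh, ∑ j ∈ Finset.range (mR i), ∑ u ∈ Finset.range mg,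
          (F.compRHS a (h1 i • b) ((R i j * g1 u) • c) p q) ⊗ₜ[k] (S i j * (g2 u * e)) := by
  have hrepi : ∀ i, Coalgebra.comul (R := k) (h2 i * g)
      = ∑ t ∈ Finset.range (mR i) ×ˢ Finset.range mg,
          (R i t.1 * g1 t.2) ⊗ₜ[k] (S i t.1 * g2 t.2) := by
    intro i
    calc Coalgebra.comul (R := k) (h2 i * g)
        = ∑ j ∈ Finset.range (mR i), ∑ u ∈ Finset.range mg,
            (R i j ⊗ₜ[k] S i j) * (g1 u ⊗ₜ[k] g2 u) := by
          rw [Bialgebra.comul_mul, hR i, hg, Finset.sum_mul_sum]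
      _ = ∑ j ∈ Finset.range (mR i), ∑ u ∈ Finset.range mg,
            (R i j * g1 u) ⊗ₜ[k] (S i j * g2 u) := by
          exact Finset.sum_congr rfl fun j _ => Finset.sum_congr rfl fun u _ =>
            Algebra.TensorProduct.tmul_mul_tmul _ _ _ _
      _ = _ := (Finset.sum_product' _ _ _).symm
  rw [compRHS_def]
  rw [YS_rep F a b h g (-p - 1) hh, YS_sum_left]
  have step : ∀ i ∈ Finset.range mh,
      (smashVA H F).Y ((F.Y a (-p - 1) (h1 i • b)) ⊗ₜ[k] (h2 i * g)) (-q - 1) (c ⊗ₜ[k] e)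
        = ∑ j ∈ Finset.range (mR i), ∑ u ∈ Finset.range mg,
            (F.Y (F.Y a (-p - 1) (h1 i • b)) (-q - 1) ((R i j * g1 u) • c))
              ⊗ₜ[k] ((S i j * g2 u) * e) := by
    intro i _
    rw [YS_rep F (F.Y a (-p - 1) (h1 i • b)) c (h2 i * g) e (-q - 1) (hrepi i)]
    exact Finset.sum_product _ _ _
  rw [Finset.sum_congr rfl step]
  simp only [Finset.smul_sum]
  refine Finset.sum_congr rfl fun i _ => Finset.sum_congr rfl fun j _ =>
    Finset.sum_congr rfl fun u _ => ?_
  rw [compRHS_def, mul_assoc]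
  exact (zsmul_tmul' _ _ _).symm

end Smash4

section Smash5
open TensorProduct
variable {k : Type*} [CommRing k] {V : Type*} [AddCommGroup V] [Module k V]
  {H : Type*} [Ring H] [HopfAlgebra k H]
  [Module H V] [IsScalarTower k H V] [SMulCommClass k H V]

lemma zwMul_zero_fun {W : Type*} [AddCommGroup W] (n : ℕ) (p q : ℤ) :
    zwMul n (fun _ _ => (0 : W)) p q = 0 := by
  simp [zwMul]

lemma compLHS_zero₁ {W : Type*} [AddCommGroup W] [Module k W] (G : VAData k W) (b c : W)
    (p q : ℤ) : G.compLHS 0 b c p q = 0 := by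
  rw [compLHS_def]
  have h0 : ∀ j : ℕ, ibinom (p + (j : ℤ)) j
      • G.Y 0 (-p - 1 - (j : ℤ)) (G.Y b ((j : ℤ) - 1 - q) c) = 0 := by
    intro j
    rw [map_zero]
    simp
  rw [finsum_congr h0, finsum_zero, smul_zero]

lemma compLHS_zero₂ {W : Type*} [AddCommGroup W] [Module k W] (G : VAData k W) (a c : W)
    (p q : ℤ) : G.compLHS a 0 c p q = 0 := by
  rw [compLHS_def]
  have h0 : ∀ j : ℕ, ibinom (p + (j : ℤ)) j
      • G.Y a (-p - 1 - (j : ℤ)) (G.Y 0 ((j : ℤ) - 1 - q) c) = 0 := by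
    intro j
    rw [map_zero]
    simp
  rw [finsum_congr h0, finsum_zero, smul_zero]

lemma compLHS_zero₃ {W : Type*} [AddCommGroup W] [Module k W] (G : VAData k W) (a b : W)
    (p q : ℤ) : G.compLHS a b 0 p q = 0 := by
  rw [compLHS_def]
  have h0 : ∀ j : ℕ, ibinom (p + (j : ℤ)) j
      • G.Y a (-p - 1 - (j : ℤ)) (G.Y b ((j : ℤ) - 1 - q) 0) = 0 := by
    intro j
    rw [map_zero, map_zero, smul_zero]
  rw [finsum_congr h0, finsum_zero, smul_zero]

lemma compRHS_zero₁ {W : Type*} [AddCommGroup W] [Module k W] (G : VAData k W) (b c : W)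
    (p q : ℤ) : G.compRHS 0 b c p q = 0 := by
  rw [compRHS_def, map_zero]
  simp

lemma compRHS_zero₂ {W : Type*} [AddCommGroup W] [Module k W] (G : VAData k W) (a c : W)
    (p q : ℤ) : G.compRHS a 0 c p q = 0 := by
  rw [compRHS_def, map_zero, map_zero]
  simp

lemma compRHS_zero₃ {W : Type*} [AddCommGroup W] [Module k W] (G : VAData k W) (a b : W)
    (p q : ℤ) : G.compRHS a b 0 p q = 0 := by
  rw [compRHS_def, map_zero, smul_zero]

lemma compRHS_add_left {W : Type*} [AddCommGroup W] [Module k W] (G : VAData k W)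
    (a₁ a₂ b c : W) (p q : ℤ) :
    G.compRHS (a₁ + a₂) b c p q = G.compRHS a₁ b c p q + G.compRHS a₂ b c p q := by
  simp only [compRHS_def, map_add, Pi.add_apply, LinearMap.add_apply, smul_add]

lemma compLHS_add₁ {W : Type*} [AddCommGroup W] [Module k W] (G : VAData k W)
    (htrG : ∀ a b : W, ∃ N : ℤ, ∀ n : ℤ, N ≤ n → G.Y a n b = 0)
    (a a' b c : W) (p q : ℤ) :
    G.compLHS (a + a') b c p q = G.compLHS a b c p q + G.compLHS a' b c p q := by
  obtain ⟨Nb, hNb⟩ := htrG b c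
  set J := (Nb + 1 + q).toNat with hJ
  have hb : ∀ j : ℕ, (J : ℤ) ≤ (j : ℤ) → G.Y b ((j : ℤ) - 1 - q) c = 0 := by
    intro j hj
    apply hNb
    have := Int.self_le_toNat (Nb + 1 + q)
    omega
  rw [compLHS_eq_tr G (a + a') b c q J hb p, compLHS_eq_tr G a b c q J hb p,
    compLHS_eq_tr G a' b c q J hb p]
  unfold VAData.compLHStr
  rw [← smul_add, ← Finset.sum_add_distrib]
  congr 1
  refine Finset.sum_congr rfl fun j _ => ?_
  simp only [map_add, Pi.add_apply, LinearMap.add_apply, smul_add]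

lemma compLHS_add₂ {W : Type*} [AddCommGroup W] [Module k W] (G : VAData k W)
    (htrG : ∀ a b : W, ∃ N : ℤ, ∀ n : ℤ, N ≤ n → G.Y a n b = 0)
    (a b b' c : W) (p q : ℤ) :
    G.compLHS a (b + b') c p q = G.compLHS a b c p q + G.compLHS a b' c p q := by
  obtain ⟨N₁, hN₁⟩ := htrG b c
  obtain ⟨N₂, hN₂⟩ := htrG b' c
  set J := (max N₁ N₂ + 1 + q).toNat with hJ
  have hInt := Int.self_le_toNat (max N₁ N₂ + 1 + q)
  have hb : ∀ j : ℕ, (J : ℤ) ≤ (j : ℤ) → G.Y b ((j : ℤ) - 1 - q) c = 0 := by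
    intro j hj
    apply hN₁
    have := le_max_left N₁ N₂
    omega
  have hb' : ∀ j : ℕ, (J : ℤ) ≤ (j : ℤ) → G.Y b' ((j : ℤ) - 1 - q) c = 0 := by
    intro j hj
    apply hN₂
    have := le_max_right N₁ N₂
    omega
  have hbb : ∀ j : ℕ, (J : ℤ) ≤ (j : ℤ) → G.Y (b + b') ((j : ℤ) - 1 - q) c = 0 := by
    intro j hj
    simp only [map_add, Pi.add_apply, LinearMap.add_apply]
    rw [hb j hj, hb' j hj, add_zero]
  rw [compLHS_eq_tr G a (b + b') c q J hbb p, compLHS_eq_tr G a b c q J hb p,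
    compLHS_eq_tr G a b' c q J hb' p]
  unfold VAData.compLHStr
  rw [← smul_add, ← Finset.sum_add_distrib]
  congr 1
  refine Finset.sum_congr rfl fun j _ => ?_
  simp only [map_add, Pi.add_apply, LinearMap.add_apply, smul_add]

lemma compLHS_add₃ {W : Type*} [AddCommGroup W] [Module k W] (G : VAData k W)
    (htrG : ∀ a b : W, ∃ N : ℤ, ∀ n : ℤ, N ≤ n → G.Y a n b = 0)
    (a b c c' : W) (p q : ℤ) :
    G.compLHS a b (c + c') p q = G.compLHS a b c p q + G.compLHS a b c' p q := by
  obtain ⟨N₁, hN₁⟩ := htrG b c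
  obtain ⟨N₂, hN₂⟩ := htrG b c'
  set J := (max N₁ N₂ + 1 + q).toNat with hJ
  have hInt := Int.self_le_toNat (max N₁ N₂ + 1 + q)
  have hb : ∀ j : ℕ, (J : ℤ) ≤ (j : ℤ) → G.Y b ((j : ℤ) - 1 - q) c = 0 := by
    intro j hj
    apply hN₁
    have := le_max_left N₁ N₂
    omega
  have hb' : ∀ j : ℕ, (J : ℤ) ≤ (j : ℤ) → G.Y b ((j : ℤ) - 1 - q) c' = 0 := by
    intro j hj
    apply hN₂
    have := le_max_right N₁ N₂
    omega
  have hbb : ∀ j : ℕ, (J : ℤ) ≤ (j : ℤ) → G.Y b ((j : ℤ) - 1 - q) (c + c') = 0 := by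
    intro j hj
    rw [map_add, hb j hj, hb' j hj, add_zero]
  rw [compLHS_eq_tr G a b (c + c') q J hbb p, compLHS_eq_tr G a b c q J hb p,
    compLHS_eq_tr G a b c' q J hb' p]
  unfold VAData.compLHStr
  rw [← smul_add, ← Finset.sum_add_distrib]
  congr 1
  refine Finset.sum_congr rfl fun j _ => ?_
  rw [map_add, map_add, smul_add]

lemma smash_assoc_tmul (F : VAData k V) (hHF : IsHModuleFA H F)
    (htr : ∀ a b : V, ∃ N : ℤ, ∀ n : ℤ, N ≤ n → F.Y a n b = 0)
    (hassoc : F.IsAssocFA) (a b c : V) (h g e : H) :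
    ∃ N : ℕ, ∀ p q : ℤ,
      zwMul N ((smashVA H F).compLHS (a ⊗ₜ[k] h) (b ⊗ₜ[k] g) (c ⊗ₜ[k] e)) p q
        = zwMul N ((smashVA H F).compRHS (a ⊗ₜ[k] h) (b ⊗ₜ[k] g) (c ⊗ₜ[k] e)) p q := by
  classical
  obtain ⟨mg, g1, g2, hg⟩ := exists_rep (Coalgebra.comul (R := k) g)
  obtain ⟨mh, h1, h2, hh⟩ := exists_rep (Coalgebra.comul (R := k) h)
  choose mP P Q hP using fun i => exists_rep (Coalgebra.comul (R := k) (h1 i))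
  choose mR R S hR using fun i => exists_rep (Coalgebra.comul (R := k) (h2 i))
  choose NA hNA using fun (i j u : ℕ) => hassoc a (P i j • b) ((Q i j * g1 u) • c)
  set N := ((Finset.range mh ×ˢ Finset.range ((Finset.range mh).sup mP)) ×ˢ Finset.range mg).sup
    (fun t => NA t.1.1 t.1.2 t.2) with hNdef
  have hle : ∀ i ∈ Finset.range mh, ∀ j ∈ Finset.range (mP i), ∀ u ∈ Finset.range mg,
      NA i j u ≤ N := by
    intro i hi j hj u hu
    have hmem : ((i, j), u) ∈
        (Finset.range mh ×ˢ Finset.range ((Finset.range mh).sup mP)) ×ˢ Finset.range mg :=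
      Finset.mem_product.mpr ⟨Finset.mem_product.mpr ⟨hi,
        Finset.mem_range.mpr (lt_of_lt_of_le (Finset.mem_range.mp hj) (Finset.le_sup hi))⟩, hu⟩
    exact Finset.le_sup (f := fun t : (ℕ × ℕ) × ℕ => NA t.1.1 t.1.2 t.2) hmem
  refine ⟨N, fun p q => ?_⟩
  rw [zwMul_congr (fun p q => smash_lhsFormula F hHF htr a b c h g e hg hh hP p q) p q,
      zwMul_congr (fun p q => smash_rhsFormula F a b c h g e hg hh hR p q) p q]
  have e1 : zwMul N (fun p q => ∑ i ∈ Finset.range mh, ∑ j ∈ Finset.range (mP i),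
        ∑ u ∈ Finset.range mg,
        (F.compLHS a (P i j • b) ((Q i j * g1 u) • c) p q) ⊗ₜ[k] (h2 i * (g2 u * e))) p q
      = ∑ i ∈ Finset.range mh, ∑ j ∈ Finset.range (mP i), ∑ u ∈ Finset.range mg,
        (zwMul N (F.compLHS a (P i j • b) ((Q i j * g1 u) • c)) p q)
          ⊗ₜ[k] (h2 i * (g2 u * e)) := by
    rw [zwMul_sum]
    refine Finset.sum_congr rfl fun i _ => ?_
    rw [zwMul_sum]
    refine Finset.sum_congr rfl fun j _ => ?_
    rw [zwMul_sum]
    refine Finset.sum_congr rfl fun u _ => ?_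
    exact zwMul_addHom (((TensorProduct.mk k V H).flip (h2 i * (g2 u * e))).toAddMonoidHom)
      N (F.compLHS a (P i j • b) ((Q i j * g1 u) • c)) p q
  have e2 : zwMul N (fun p q => ∑ i ∈ Finset.range mh, ∑ j ∈ Finset.range (mR i),
        ∑ u ∈ Finset.range mg,
        (F.compRHS a (h1 i • b) ((R i j * g1 u) • c) p q) ⊗ₜ[k] (S i j * (g2 u * e))) p q
      = ∑ i ∈ Finset.range mh, ∑ j ∈ Finset.range (mR i), ∑ u ∈ Finset.range mg,
        (zwMul N (F.compRHS a (h1 i • b) ((R i j * g1 u) • c)) p q)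
          ⊗ₜ[k] (S i j * (g2 u * e)) := by
    rw [zwMul_sum]
    refine Finset.sum_congr rfl fun i _ => ?_
    rw [zwMul_sum]
    refine Finset.sum_congr rfl fun j _ => ?_
    rw [zwMul_sum]
    refine Finset.sum_congr rfl fun u _ => ?_
    exact zwMul_addHom (((TensorProduct.mk k V H).flip (S i j * (g2 u * e))).toAddMonoidHom)
      N (F.compRHS a (h1 i • b) ((R i j * g1 u) • c)) p q
  rw [e1, e2]
  have e3 : ∀ i ∈ Finset.range mh, ∀ j ∈ Finset.range (mP i), ∀ u ∈ Finset.range mg,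
      (zwMul N (F.compLHS a (P i j • b) ((Q i j * g1 u) • c)) p q)
          ⊗ₜ[k] (h2 i * (g2 u * e))
        = psiMap F a b c (g1 u) (g2 u * e) N p q (P i j) (Q i j) (h2 i) := by
    intro i hi j hj u hu
    rw [psiMap_apply, zwMul_eq_of_le (hle i hi j hj u hu) (hNA i j u) p q]
  rw [Finset.sum_congr rfl (fun i hi => Finset.sum_congr rfl (fun j hj =>
    Finset.sum_congr rfl (fun u hu => e3 i hi j hj u hu)))]
  have e4 : ∀ i ∈ Finset.range mh, ∀ j ∈ Finset.range (mR i), ∀ u ∈ Finset.range mg,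
      (zwMul N (F.compRHS a (h1 i • b) ((R i j * g1 u) • c)) p q)
          ⊗ₜ[k] (S i j * (g2 u * e))
        = psiMap F a b c (g1 u) (g2 u * e) N p q (h1 i) (R i j) (S i j) := by
    intro i _ j _ u _
    rw [psiMap_apply]
  rw [Finset.sum_congr rfl (fun i hi => Finset.sum_congr rfl (fun j hj =>
    Finset.sum_congr rfl (fun u hu => e4 i hi j hj u hu)))]
  have swapL : ∑ i ∈ Finset.range mh, ∑ j ∈ Finset.range (mP i), ∑ u ∈ Finset.range mg,
        psiMap F a b c (g1 u) (g2 u * e) N p q (P i j) (Q i j) (h2 i)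
      = ∑ u ∈ Finset.range mg, ∑ i ∈ Finset.range mh, ∑ j ∈ Finset.range (mP i),
        psiMap F a b c (g1 u) (g2 u * e) N p q (P i j) (Q i j) (h2 i) := by
    rw [Finset.sum_congr rfl (fun i (_ : i ∈ Finset.range mh) => Finset.sum_comm)]
    exact Finset.sum_comm
  have swapR : ∑ i ∈ Finset.range mh, ∑ j ∈ Finset.range (mR i), ∑ u ∈ Finset.range mg,
        psiMap F a b c (g1 u) (g2 u * e) N p q (h1 i) (R i j) (S i j)
      = ∑ u ∈ Finset.range mg, ∑ i ∈ Finset.range mh, ∑ j ∈ Finset.range (mR i),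
        psiMap F a b c (g1 u) (g2 u * e) N p q (h1 i) (R i j) (S i j) := by
    rw [Finset.sum_congr rfl (fun i (_ : i ∈ Finset.range mh) => Finset.sum_comm)]
    exact Finset.sum_comm
  rw [swapL, swapR]
  exact Finset.sum_congr rfl fun u _ =>
    coassoc_swap (psiMap F a b c (g1 u) (g2 u * e) N p q) hh
      (fun i _ => hP i) (fun i _ => hR i)

end Smash5

section Smash6
open TensorProduct
variable {k : Type*} [CommRing k] {V : Type*} [AddCommGroup V] [Module k V]
  {H : Type*} [Ring H] [HopfAlgebra k H]
  [Module H V] [IsScalarTower k H V] [SMulCommClass k H V]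

lemma smash_assoc (F : VAData k V) (hHF : IsHModuleFA H F)
    (htr : ∀ a b : V, ∃ N : ℤ, ∀ n : ℤ, N ≤ n → F.Y a n b = 0)
    (hassoc : F.IsAssocFA) : (smashVA H F).IsAssocFA := by
  have htrS := smash_trunc (H := H) F htr
  intro x y w
  induction x using TensorProduct.induction_on with
  | zero =>
    refine ⟨0, fun p q => ?_⟩
    rw [zwMul_congr (fun p q => compLHS_zero₁ (smashVA H F) y w p q) p q,
        zwMul_congr (fun p q => compRHS_zero₁ (smashVA H F) y w p q) p q]
  | add x₁ x₂ ih₁ ih₂ =>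
    obtain ⟨N₁, hN₁⟩ := ih₁
    obtain ⟨N₂, hN₂⟩ := ih₂
    refine ⟨max N₁ N₂, fun p q => ?_⟩
    rw [zwMul_congr (fun p q => compLHS_add₁ (smashVA H F) htrS x₁ x₂ y w p q) p q,
        zwMul_congr (fun p q => compRHS_add_left (smashVA H F) x₁ x₂ y w p q) p q,
        zwMul_add, zwMul_add,
        zwMul_eq_of_le (le_max_left N₁ N₂) hN₁ p q,
        zwMul_eq_of_le (le_max_right N₁ N₂) hN₂ p q]
  | tmul a h =>
    induction y using TensorProduct.induction_on with
    | zero =>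
      refine ⟨0, fun p q => ?_⟩
      rw [zwMul_congr (fun p q => compLHS_zero₂ (smashVA H F) _ w p q) p q,
          zwMul_congr (fun p q => compRHS_zero₂ (smashVA H F) _ w p q) p q]
    | add y₁ y₂ ih₁ ih₂ =>
      obtain ⟨N₁, hN₁⟩ := ih₁
      obtain ⟨N₂, hN₂⟩ := ih₂
      refine ⟨max N₁ N₂, fun p q => ?_⟩
      rw [zwMul_congr (fun p q => compLHS_add₂ (smashVA H F) htrS _ y₁ y₂ w p q) p q,
          zwMul_congr (fun p q => compRHS_add_mid (smashVA H F) _ y₁ y₂ w p q) p q,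
          zwMul_add, zwMul_add,
          zwMul_eq_of_le (le_max_left N₁ N₂) hN₁ p q,
          zwMul_eq_of_le (le_max_right N₁ N₂) hN₂ p q]
    | tmul b g =>
      induction w using TensorProduct.induction_on with
      | zero =>
        refine ⟨0, fun p q => ?_⟩
        rw [zwMul_congr (fun p q => compLHS_zero₃ (smashVA H F) _ _ p q) p q,
            zwMul_congr (fun p q => compRHS_zero₃ (smashVA H F) _ _ p q) p q]
      | add w₁ w₂ ih₁ ih₂ =>
        obtain ⟨N₁, hN₁⟩ := ih₁
        obtain ⟨N₂, hN₂⟩ := ih₂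
        refine ⟨max N₁ N₂, fun p q => ?_⟩
        rw [zwMul_congr (fun p q => compLHS_add₃ (smashVA H F) htrS _ _ w₁ w₂ p q) p q,
            zwMul_congr (fun p q => compRHS_add_right (smashVA H F) _ _ w₁ w₂ p q) p q,
            zwMul_add, zwMul_add,
            zwMul_eq_of_le (le_max_left N₁ N₂) hN₁ p q,
            zwMul_eq_of_le (le_max_right N₁ N₂) hN₂ p q]
      | tmul c e => exact smash_assoc_tmul F hHF htr hassoc a b c h g e

lemma smashVA_isFieldAlgebra (F : VAData k V) (hF : F.IsFieldAlgebra)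
    (hHF : IsHModuleFA H F) : (smashVA H F).IsFieldAlgebra := by
  obtain ⟨⟨htr, hvl, hvr0, hvr1, hvr2, ht1, ht2⟩, hassoc⟩ := hF
  refine ⟨⟨smash_trunc F htr, smash_vacL F hvl, smash_vacR0 F hHF hvr0,
    smash_vacR1 F hHF hvr1, smash_vacR2 F hHF hvr2, ?_, ?_⟩,
    smash_assoc F hHF htr hassoc⟩
  · intro x y n
    exact smash_T1 F hHF ht1 x y n
  · intro x y n
    exact smash_T2 F ht2 x y n

end Smash6








/-- For a Hopf algebra `H` and an `H`-module field algebra `V`: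
(1) the fixed-point space `V^H` contains the vacuum, is stable under the translation
operator and under all `n`-th products, and carries an induced field algebra structure;
(2) `V ⊗ H` with `Y_H(a⊗h,z)(b⊗g) = ∑ aₙ(h₁b) ⊗ h₂g z^{-n-1}`, vacuum `1⊗1` and
translation `s⊗1` is a field algebra. -/
theorem statement3 {k : Type*} [Field k] [CharZero k]
    {V : Type*} [AddCommGroup V] [Module k V]
    {H : Type*} [Ring H] [HopfAlgebra k H]
    [Module H V] [IsScalarTower k H V] [SMulCommClass k H V]
    (F : VAData k V) (hF : F.IsFieldAlgebra) (hHF : IsHModuleFA H F) :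
    -- (1) stability of the fixed points
    (F.vac ∈ hFixed k V H) ∧
    (∀ v ∈ hFixed k V H, F.T v ∈ hFixed k V H) ∧
    (∀ a ∈ hFixed k V H, ∀ b ∈ hFixed k V H, ∀ n : ℤ, F.Y a n b ∈ hFixed k V H) ∧
    -- (1') `V^H` is a field algebra with the restricted structure
    (∃ FH : VAData k (hFixed k V H),
      ((FH.vac : V) = F.vac) ∧
      (∀ a : hFixed k V H, (FH.T a : V) = F.T (a : V)) ∧
      (∀ (a b : hFixed k V H) (m : ℤ), (FH.Y a m b : V) = F.Y (a : V) m (b : V)) ∧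
      FH.IsFieldAlgebra) ∧
    -- (2) `V ⊗ H` is a field algebra with the smash product structure
    (∃ FS : VAData k (V ⊗[k] H), SmashChar H F FS ∧ FS.IsFieldAlgebra) := by
  refine ⟨hFixed_vac F hHF, fun v hv => hFixed_T F hHF hv,
    fun a ha b hb n => hFixed_Y F hHF ha hb n,
    ⟨fixedVA H F hHF, rfl, fun a => rfl, fun a b m => rfl,
      fixedVA_isFieldAlgebra F hF hHF⟩,
    ⟨smashVA H F, smash_char F, smashVA_isFieldAlgebra F hF hHF⟩⟩

end HopfVA
end

section
/- Let H be a finite-dimensional Hopf algebra over k, (V,Y,1,s) an H-module field algebra (equivalently, a right H*-comodule field algebra), and t a nonzero left integral of H. Then the map t̂: V → V^H, v ↦ tv, is surjective if and only if there exists a total integral φ: H* → V, that is, a right H*-comodule map with φ(1_{H*}) = 1. -/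
open scoped TensorProduct DirectSum

/-!
With `Θ = ∑ t₁ ⊗ S(t₂)` for the left integral `t`, one has `(h ⊗ 1) Θ = Θ (1 ⊗ h)` for all `h`.
Hence, if `t u = 1`, then `f ↦ ∑ f(S(t₂)) t₁ u` is an `H`-linear map `H* → V` sending `ε` to
`(id ⊗ ε)(Θ) u = t u = 1`. Conversely, given such a `φ` and `g ∈ H*` with `g(t) = 1`, the
integral property gives `g(· t) = ε`, so `t φ(g) = φ(ε) = 1`; since `H` acts on a product `v₋₁w`
with `v` invariant only through `w`, `t (v₋₁ φ(g)) = v₋₁ 1 = v` for every `v ∈ V^H`.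
-/

open Coalgebra HopfAlgebra TensorProduct LinearMap WithConv

namespace HopfVA

theorem exists_fin_sum_tmul {R M N : Type*} [CommSemiring R] [AddCommMonoid M] [AddCommMonoid N]
    [Module R M] [Module R N] (z : M ⊗[R] N) :
    ∃ (m : ℕ) (a : Fin m → M) (b : Fin m → N), z = ∑ i, a i ⊗ₜ[R] b i := by
  induction z with
  | zero => exact ⟨0, ![], ![], by simp⟩
  | tmul x y => exact ⟨1, ![x], ![y], by simp⟩
  | add u v hu hv =>
    obtain ⟨m, a, b, rfl⟩ := hu
    obtain ⟨n, c, d, rfl⟩ := hv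
    exact ⟨m + n, Fin.append a c, Fin.append b d, by simp [Fin.sum_univ_add]⟩

section Algebra

variable {k H : Type*} [CommSemiring k] [Semiring H] [Algebra k H]

theorem rid_lTensor_mul_one_tmul (f : H →ₗ[k] k) (z : H ⊗[k] H) (h : H) :
    TensorProduct.rid k H (lTensor H f (z * ((1 : H) ⊗ₜ[k] h))) =
      TensorProduct.rid k H (lTensor H (f ∘ₗ mulRight k h) z) := by
  induction z with
  | zero => simp
  | tmul a b => simp
  | add u v hu hv => simp only [add_mul, map_add, hu, hv]

theorem rid_lTensor_tmul_one_mul (f : H →ₗ[k] k) (z : H ⊗[k] H) (h : H) :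
    TensorProduct.rid k H (lTensor H f ((h ⊗ₜ[k] (1 : H)) * z)) =
      h * TensorProduct.rid k H (lTensor H f z) := by
  induction z with
  | zero => simp
  | tmul a b => simp
  | add u v hu hv => simp only [mul_add, map_add, hu, hv]

end Algebra

section Hopf

open Algebra.TensorProduct (includeLeft includeRight includeLeft_apply includeRight_apply)

variable {k H : Type*} [CommSemiring k] [Semiring H] [HopfAlgebra k H]

theorem includeRight_comp_antipode_convMul_includeRight :
    toConv ((includeRight : H →ₐ[k] H ⊗[k] H).toLinearMap ∘ₗ antipode k) *
      toConv (includeRight : H →ₐ[k] H ⊗[k] H).toLinearMap = 1 := by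
  have := algHom_comp_convMul_distrib (includeRight : H →ₐ[k] H ⊗[k] H)
    (toConv (antipode k)) (toConv LinearMap.id)
  rw [antipode_mul_id] at this
  ext h
  rw [convOne_apply, ← includeRight.commutes]
  exact congr($this h).symm

-- In Sweedler notation, with `θ(x) = ∑ x₁ ⊗ S(x₂)`: `θ(hx) = ∑ (h₁ ⊗ 1) θ(x) (1 ⊗ S(h₂))`.
-- Convolving on the right with `h ↦ 1 ⊗ h` cancels the last factor since `S * id = 1`.
theorem lTensor_antipode_comul_comp_mulRight (x : H) :
    toConv (lTensor H (antipode k) ∘ₗ comul ∘ₗ mulRight k x) =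
      toConv (mulRight k (lTensor H (antipode k) (comul x)) ∘ₗ
          (includeLeft : H →ₐ[k] H ⊗[k] H).toLinearMap) *
        toConv ((includeRight : H →ₐ[k] H ⊗[k] H).toLinearMap ∘ₗ antipode k) := by
  ext h
  let r := ℛ k h
  let s := ℛ k x
  rw [r.convMul_apply]
  simp only [comp_apply, mulRight_apply, Bialgebra.comul_mul, ← r.eq, ← s.eq]
  simp [Finset.sum_mul, Finset.mul_sum, antipode_mul_antidistrib, Finset.sum_comm (s := s.index)]

theorem lTensor_antipode_comul_comp_mulRight_convMul_includeRight (x : H) :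
    toConv (lTensor H (antipode k) ∘ₗ comul ∘ₗ mulRight k x) *
        toConv (includeRight : H →ₐ[k] H ⊗[k] H).toLinearMap =
      toConv (mulRight k (lTensor H (antipode k) (comul x)) ∘ₗ
          (includeLeft : H →ₐ[k] H ⊗[k] H).toLinearMap) := by
  rw [lTensor_antipode_comul_comp_mulRight, mul_assoc,
    includeRight_comp_antipode_convMul_includeRight, mul_one]

theorem tmul_one_mul_lTensor_antipode_comul_of_isLeftIntegral {t : H}
    (ht : ∀ h : H, h * t = counit (R := k) h • t) (h : H) :
    (h ⊗ₜ[k] (1 : H)) * lTensor H (antipode k) (comul t) =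
      lTensor H (antipode k) (comul t) * ((1 : H) ⊗ₜ[k] h) := by
  have := congr($(lTensor_antipode_comul_comp_mulRight_convMul_includeRight (k := k) t) h)
  rw [(ℛ k h).convMul_apply] at this
  simp only [comp_apply, mulRight_apply, ht, map_smul, AlgHom.toLinearMap_apply,
    includeRight_apply, includeLeft_apply] at this
  rw [← this]
  simp only [smul_mul_assoc, ← mul_smul_comm, ← Finset.mul_sum, ← tmul_smul, ← tmul_sum,
    sum_counit_smul]

theorem exists_dual_hom_map_counit_eq_smul {V : Type*} [AddCommMonoid V] [Module k V]
    [Module H V] [IsScalarTower k H V] {t : H} (ht : ∀ h : H, h * t = counit (R := k) h • t)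
    (u : V) :
    ∃ φ : (H →ₗ[k] k) →ₗ[k] V,
      (∀ (h : H) (f : H →ₗ[k] k), φ (f ∘ₗ mulRight k h) = h • φ f) ∧ φ counit = t • u := by
  set Θ := lTensor H (antipode k) (comul t)
  refine ⟨(toSpanSingleton H V u).restrictScalars k ∘ₗ (TensorProduct.rid k H).toLinearMap ∘ₗ
    applyₗ Θ ∘ₗ lTensorHom H, fun h f => ?_, ?_⟩
  · simp only [comp_apply, applyₗ_apply_apply, coe_lTensorHom, LinearEquiv.coe_coe,
      restrictScalars_apply, toSpanSingleton_apply]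
    rw [← rid_lTensor_mul_one_tmul, ← tmul_one_mul_lTensor_antipode_comul_of_isLeftIntegral ht,
      rid_lTensor_tmul_one_mul, mul_smul]
  · simp only [comp_apply, applyₗ_apply_apply, coe_lTensorHom, LinearEquiv.coe_coe,
      restrictScalars_apply, toSpanSingleton_apply, Θ, ← lTensor_comp_apply,
      counit_comp_antipode, lTensor_counit_comul, TensorProduct.rid_tmul, one_smul]

end Hopf

theorem IsHModuleFA.smul_Y_of_mem_hFixed {k V H : Type*} [CommRing k] [AddCommGroup V]
    [Module k V] [Ring H] [HopfAlgebra k H] [Module H V] [IsScalarTower k H V]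
    [SMulCommClass k H V] {F : VAData k V} (hHF : IsHModuleFA H F) {v : V}
    (hv : v ∈ hFixed k V H) (h : H) (n : ℤ) (w : V) :
    h • F.Y v n w = F.Y v n (h • w) := by
  obtain ⟨m, h₁, h₂, hrep⟩ := exists_fin_sum_tmul (comul (R := k) h)
  have hcounit : ∑ i, counit (R := k) (h₁ i) • h₂ i = h := by
    have := congrArg (TensorProduct.lid k H ∘ rTensor H counit) hrep
    simpa using this.symm
  calc h • F.Y v n w
      = ∑ i, F.Y (h₁ i • v) n (h₂ i • w) := hHF.2.2 h v w n m h₁ h₂ hrep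
    _ = ∑ i, F.Y v n (counit (R := k) (h₁ i) • h₂ i • w) := by
        simp only [hv _, map_smul, Pi.smul_apply, LinearMap.smul_apply]
    _ = F.Y v n (h • w) := by
        rw [← map_sum, ← hcounit, Finset.sum_smul]
        simp only [smul_assoc]

theorem statement8_general {k : Type*} [Field k]
    {V : Type*} [AddCommGroup V] [Module k V]
    {H : Type*} [Ring H] [HopfAlgebra k H]
    [Module H V] [IsScalarTower k H V] [SMulCommClass k H V]
    (F : VAData k V) (hF : F.IsFieldAlgebra) (hHF : IsHModuleFA H F)
    (t : H) (ht : ∀ h : H, h * t = (Coalgebra.counit (R := k) h) • t) (ht0 : t ≠ 0) :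
    (∀ v ∈ hFixed k V H, ∃ u : V, t • u = v) ↔
      (∃ φ : (H →ₗ[k] k) →ₗ[k] V,
        (∀ (h : H) (f : H →ₗ[k] k), φ (f ∘ₗ LinearMap.mulRight k h) = h • φ f) ∧
        φ (Coalgebra.counit (R := k)) = F.vac) := by
  constructor
  · intro hsurj
    obtain ⟨u, hu⟩ := hsurj F.vac hHF.1
    obtain ⟨φ, hφ, hφε⟩ := exists_dual_hom_map_counit_eq_smul ht u
    exact ⟨φ, hφ, hφε.trans hu⟩
  · rintro ⟨φ, hφ, hφε⟩ v hv
    obtain ⟨g, hg⟩ := Module.Projective.exists_dual_eq_one k ht0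
    have hg_mulRight : g ∘ₗ mulRight k t = counit := by
      ext h
      simp [ht, hg]
    refine ⟨F.Y v (-1) (φ g), ?_⟩
    rw [hHF.smul_Y_of_mem_hFixed hv, ← hφ, hg_mulRight, hφε]
    exact hF.1.2.2.2.1 v

/-- For a finite-dimensional Hopf algebra `H`, an `H`-module field
algebra `V`, and a nonzero left integral `t` of `H`, the map `t̂ : V → V^H, v ↦ tv` is
surjective if and only if there exists a total integral `φ : H* → V`, i.e. a right
`H*`-comodule map (equivalently, a left `H`-module map for the action
`(h ⇀ f)(x) = f(xh)` on `H*`) with `φ(1_{H*}) = φ(ε) = 1`. -/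
theorem statement8 {k : Type*} [Field k] [CharZero k]
    {V : Type*} [AddCommGroup V] [Module k V]
    {H : Type*} [Ring H] [HopfAlgebra k H] [FiniteDimensional k H]
    [Module H V] [IsScalarTower k H V] [SMulCommClass k H V]
    (F : VAData k V) (hF : F.IsFieldAlgebra) (hHF : IsHModuleFA H F)
    (t : H) (ht : ∀ h : H, h * t = (Coalgebra.counit (R := k) h) • t) (ht0 : t ≠ 0) :
    (∀ v ∈ hFixed k V H, ∃ u : V, t • u = v) ↔
      (∃ φ : (H →ₗ[k] k) →ₗ[k] V,
        (∀ (h : H) (f : H →ₗ[k] k), φ (f ∘ₗ LinearMap.mulRight k h) = h • φ f) ∧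
        φ (Coalgebra.counit (R := k)) = F.vac) :=
  statement8_general F hF hHF t ht ht0

end HopfVA
end
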